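/- arXiv:2508.13297 — 5 statements merged into one kernel-verified Lean document; each statement's English description precedes it below -/
import Mathlib

section
/- (First splitting lemma, part 1.) For all integers l ≥ 1 and 1 ≤ r ≤ l, S(l, r) = Σ_{κ=1}^{q} Σ_{f} Σ_{u} Σ_{v} S_2^{(κ)}(l, r, f, u, v), where the sums run over f ∈ ℤ^κ with f_i ≥ 1 for all i ∈ [κ], ‖f‖_1 ≤ l and f_1 ≤ r; over u ∈ ℤ_+^κ with ‖u‖_1 = l − ‖f‖_1; and over v ∈ ℤ_+^κ with v_i ≤ u_i for all i and v_1 = r − f_1. -/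
open Finset MeasureTheory ProbabilityTheory Filter
open scoped Classical

noncomputable section

/-- Data of a closed walk of `k` steps: the vertex sequence `w₁, …, w_{k+1}` and the
hyperedge sequence `e₁, …, e_k`. -/
abbrev WalkData (V : Type) (k : ℕ) := (Fin (k + 1) → V) × (Fin k → Finset V)

variable {V : Type} [DecidableEq V]

/-- `w` is a closed walk of `k` steps on `q`-element hyperedges. -/
def IsClosedWalk (q k : ℕ) (w : WalkData V k) : Prop :=
  w.1 (Fin.last k) = w.1 0 ∧ (∀ i, (w.2 i).card = q) ∧
    ∀ i : Fin k, w.1 i.castSucc ∈ w.2 i ∧ w.1 i.succ ∈ w.2 i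

/-- The set `E_w` of distinct hyperedges of a walk. -/
def edgeSet {k : ℕ} (w : WalkData V k) : Finset (Finset V) := Finset.univ.image w.2

/-- The set `Ṽ_w` of visited vertices of a walk. -/
def visited {k : ℕ} (w : WalkData V k) : Finset V := Finset.univ.image w.1

/-- The vertex set `V_w` of (the skeleton of) a walk. -/
def vertSet {k : ℕ} (w : WalkData V k) : Finset V := Finset.univ.sup w.2 ∪ visited w

/-- `n_w(e)`, the number of steps of `w` along the hyperedge `e`. -/
def stepCount {k : ℕ} (w : WalkData V k) (e : Finset V) : ℕ :=
  (Finset.univ.filter fun i : Fin k => w.2 i = e).card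

/-- The number of steps of `w` departing from the root `w₁`. -/
def rootSteps {k : ℕ} (w : WalkData V k) : ℕ :=
  (Finset.univ.filter fun i : Fin k => w.1 i.castSucc = w.1 0).card

/-- The contribution `θ(w) = ∏_{e ∈ E_w} p ⬝ X_{n_w(e)} / |β(e)|!` of a walk, where
`β(e) = e \ Ṽ_w`. -/
def contrib (p : ℝ) (X : ℕ → ℝ) {k : ℕ} (w : WalkData V k) : ℝ :=
  ∏ e ∈ edgeSet w, p * X (stepCount w e) / (Nat.factorial (e \ visited w).card)

/-- Equivalence of walks: a relabeling of the vertices carrying one walk to the other. -/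
def WalkEquiv {k : ℕ} (w₁ w₂ : WalkData V k) : Prop :=
  ∃ φ : V → V, Set.InjOn φ (vertSet w₁) ∧ (∀ i, w₂.1 i = φ (w₁.1 i)) ∧
    ∀ i, w₂.2 i = (w₁.2 i).image φ

/-- `x` and `y` are connected by a chain of hyperedges of `E`. -/
def ConnIn (E : Finset (Finset V)) (x y : V) : Prop :=
  ∃ (t : ℕ) (c : Fin (t + 1) → Finset V), (∀ i, c i ∈ E) ∧ x ∈ c 0 ∧ y ∈ c (Fin.last t) ∧
    ∀ i : Fin t, (c i.castSucc ∩ c i.succ).Nonempty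

/-- A hypertree: a connected `q`-uniform hypergraph with `|V| = (q-1)|E| + 1`. -/
def IsHypertree (q : ℕ) (Vs : Finset V) (E : Finset (Finset V)) : Prop :=
  (∀ x ∈ Vs, ∀ y ∈ Vs, x ≠ y → ConnIn E x y) ∧ Vs.card = (q - 1) * E.card + 1

/-- An essential walk: a closed walk whose skeleton is a hypertree. -/
def IsEssential (q : ℕ) {k : ℕ} (w : WalkData V k) : Prop :=
  IsClosedWalk q k w ∧ IsHypertree q (vertSet w) (edgeSet w)

/-- `R` is a complete system of representatives of the equivalence classes of essential
walks of length `l` (the set `Λ(l,r)` of essential walks with `r` steps from the root). -/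
def IsRepSystem (q l r : ℕ) (R : Finset (WalkData ℕ l)) : Prop :=
  (∀ w ∈ R, IsEssential q w ∧ rootSteps w = r) ∧
    ∀ w' : WalkData ℕ l, IsEssential q w' → rootSteps w' = r →
      ∃! w, w ∈ R ∧ WalkEquiv w w'

/-- The vertex `w_{j+1}` of the walk (i.e. the vertex at position `j` of the sequence,
`0`-indexed), or `0` if out of range. -/
def vertAt {k : ℕ} (w : WalkData ℕ k) (j : ℕ) : ℕ :=
  if h : j < k + 1 then w.1 ⟨j, h⟩ else 0

/-- The first hyperedge `e₁` of the walk. -/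
def firstEdge {k : ℕ} (w : WalkData ℕ k) : Finset ℕ :=
  if h : 0 < k then w.2 ⟨0, h⟩ else ∅

/-- The time of the first visit of the walk to the vertex `x`. -/
def firstTime {k : ℕ} (w : WalkData ℕ k) (x : ℕ) : ℕ :=
  sInf {j : ℕ | ∃ h : j < k + 1, w.1 ⟨j, h⟩ = x}

/-- `κ = |e₁ ∩ Ṽ_w|`, the number of visited vertices of the first hyperedge. -/
def kappa {k : ℕ} (w : WalkData ℕ k) : ℕ := (firstEdge w ∩ visited w).card

/-- `e₁(i)`: the `i`-th (`1`-indexed) visited vertex of the first hyperedge, in order of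
first appearance (so `e₁(1)` is the root `w₁`). -/
def eVert {k : ℕ} (w : WalkData ℕ k) (i : ℕ) : ℕ :=
  vertAt w (((((firstEdge w ∩ visited w).image (firstTime w)).sort (· ≤ ·))).getD (i - 1) 0)

/-- `f_i`: the number of steps of `w` inside the first hyperedge departing from `e₁(i)`. -/
def fSteps {k : ℕ} (w : WalkData ℕ k) (i : ℕ) : ℕ :=
  (Finset.univ.filter fun t : Fin k =>
    w.2 t = firstEdge w ∧ w.1 t.castSucc = eVert w i).card

/-- Step `t` of `w` is inside `G_i`, the hypertree rooted at `e₁(i)` obtained after removing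
the first hyperedge from the skeleton: its edge is `≠ e₁` and it is connected to `e₁(i)`
avoiding `e₁`. -/
def inComp {k : ℕ} (w : WalkData ℕ k) (i : ℕ) (t : Fin k) : Prop :=
  w.2 t ≠ firstEdge w ∧ ∃ x ∈ w.2 t, ConnIn ((edgeSet w).erase (firstEdge w)) x (eVert w i)

/-- `u_i`: the number of steps of `w` inside `G_i`. -/
def uSteps {k : ℕ} (w : WalkData ℕ k) (i : ℕ) : ℕ :=
  (Finset.univ.filter fun t : Fin k => inComp w i t).card

/-- `v_i`: the number of steps of `w` inside `G_i` departing from `e₁(i)`. -/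
def vSteps {k : ℕ} (w : WalkData ℕ k) (i : ℕ) : ℕ :=
  (Finset.univ.filter fun t : Fin k => inComp w i t ∧ w.1 t.castSucc = eVert w i).card

/-- The first coordinate of a vector indexed by `Fin κ` (the paper's coordinate `1`). -/
def firstCoord {κ : ℕ} (f : Fin κ → ℕ) : ℕ := if h : 0 < κ then f ⟨0, h⟩ else 0

/-- `R` is a complete system of representatives of the equivalence classes of essential
walks constituting the set `Λ₂^{(κ)}(l, r, f, u, v)`: essential walks of length `l`, with
`r` steps from the root, `κ` visited vertices in the first hyperedge, and first-hyperedge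
splitting data `f, u, v` (indexed by `Fin κ`, so index `i : Fin κ` is the paper's `i+1`). -/
def IsRepSystem₂ (q l r κ : ℕ) (f u v : Fin κ → ℕ) (R : Finset (WalkData ℕ l)) : Prop :=
  (∀ w ∈ R, IsEssential q w ∧ rootSteps w = r ∧ kappa w = κ ∧
    ∀ i : Fin κ, fSteps w ((i : ℕ) + 1) = f i ∧ uSteps w ((i : ℕ) + 1) = u i ∧
      vSteps w ((i : ℕ) + 1) = v i) ∧
  ∀ w' : WalkData ℕ l, IsEssential q w' → rootSteps w' = r → kappa w' = κ →
    (∀ i : Fin κ, fSteps w' ((i : ℕ) + 1) = f i ∧ uSteps w' ((i : ℕ) + 1) = u i ∧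
      vSteps w' ((i : ℕ) + 1) = v i) →
    ∃! w, w ∈ R ∧ WalkEquiv w w'

section ConnLemmas

variable {V : Type} [DecidableEq V] {E : Finset (Finset V)} {x y z : V}

/-- List reformulation of `ConnIn`. -/
def ChainL (E : Finset (Finset V)) (x y : V) (L : List (Finset V)) : Prop :=
  L ≠ [] ∧ (∀ e ∈ L, e ∈ E) ∧ L.Chain' (fun a b => (a ∩ b).Nonempty) ∧
    x ∈ L.head?.getD ∅ ∧ y ∈ L.getLast?.getD ∅

lemma connIn_iff_chainL : ConnIn E x y ↔ ∃ L, ChainL E x y L := by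
  constructor
  · rintro ⟨t, c, hc, hx, hy, hi⟩
    have hne : List.ofFn c ≠ [] := by simp [← List.length_pos_iff]
    refine ⟨List.ofFn c, hne, ?_, ?_, ?_, ?_⟩
    · intro e he
      obtain ⟨i, rfl⟩ := List.mem_ofFn.1 he
      exact hc i
    · simp only [List.Chain', List.isChain_iff_getElem]
      intro i hlen
      simp only [List.length_ofFn] at hlen
      have h1 : i < t := by omega
      have := hi ⟨i, h1⟩
      simp only [List.getElem_ofFn]
      exact this
    · rw [List.ofFn_succ]
      simpa using hx
    · have h2 : (List.ofFn c).getLast hne = c (Fin.last t) := by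
        rw [List.getLast_eq_getElem]
        simp only [List.getElem_ofFn, List.length_ofFn]
        congr 1
      rw [List.getLast?_eq_getLast hne, h2]
      simpa using hy
  · rintro ⟨L, hne, hmem, hch, hx, hy⟩
    have hpos : 0 < L.length := List.length_pos_iff.2 hne
    have hlen : L.length - 1 + 1 = L.length := Nat.succ_pred_eq_of_pos hpos
    refine ⟨L.length - 1, fun i => L.get (Fin.cast hlen i), fun i => hmem _ (L.get_mem _),
      ?_, ?_, ?_⟩
    · obtain ⟨a, L', rfl⟩ := List.exists_cons_of_ne_nil hne
      simpa using hx
    · have h2 : L.getLast? = some (L.getLast hne) := List.getLast?_eq_getLast hne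
      rw [h2] at hy
      simp only [Option.getD_some] at hy
      have h3 : L.getLast hne = L.get ⟨L.length - 1, by omega⟩ := List.getLast_eq_getElem _
      rw [h3] at hy
      exact hy
    · intro i
      simp only [List.Chain', List.isChain_iff_getElem] at hch
      exact hch i (by have := i.isLt; omega)

lemma conn_single {e : Finset V} (he : e ∈ E) (hx : x ∈ e) (hy : y ∈ e) : ConnIn E x y :=
  ⟨0, fun _ => e, fun _ => he, hx, hy, fun i => i.elim0⟩

lemma conn_mono {E' : Finset (Finset V)} (hEE : E ⊆ E') (h : ConnIn E x y) : ConnIn E' x y := by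
  obtain ⟨t, c, hc, hx, hy, hi⟩ := h
  exact ⟨t, c, fun i => hEE (hc i), hx, hy, hi⟩

lemma conn_last_edge (h : ConnIn E x y) : ∃ e ∈ E, y ∈ e := by
  obtain ⟨t, c, hc, hx, hy, hi⟩ := h
  exact ⟨c (Fin.last t), hc _, hy⟩

lemma conn_first_edge (h : ConnIn E x y) : ∃ e ∈ E, x ∈ e := by
  obtain ⟨t, c, hc, hx, hy, hi⟩ := h
  exact ⟨c 0, hc _, hx⟩

lemma conn_symm (h : ConnIn E x y) : ConnIn E y x := by
  rw [connIn_iff_chainL] at h ⊢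
  obtain ⟨L, hne, hmem, hch, hx, hy⟩ := h
  refine ⟨L.reverse, by simpa using hne, fun e he => hmem e (by simpa using he), ?_, ?_, ?_⟩
  · simp only [List.Chain', List.isChain_reverse]
    exact List.IsChain.imp (fun a b hab => by rwa [Finset.inter_comm] at hab) hch
  · rwa [List.head?_reverse]
  · rwa [List.getLast?_reverse]

lemma conn_trans (h1 : ConnIn E x y) (h2 : ConnIn E y z) : ConnIn E x z := by
  rw [connIn_iff_chainL] at h1 h2 ⊢
  obtain ⟨L1, hne1, hmem1, hch1, hx1, hy1⟩ := h1
  obtain ⟨L2, hne2, hmem2, hch2, hy2, hz2⟩ := h2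
  refine ⟨L1 ++ L2, by simp [hne1], ?_, ?_, ?_, ?_⟩
  · intro e he
    rcases List.mem_append.1 he with h | h
    · exact hmem1 e h
    · exact hmem2 e h
  · refine List.IsChain.append hch1 hch2 ?_
    intro a ha b hb
    rw [Option.mem_def] at ha hb
    rw [ha] at hy1
    rw [hb] at hy2
    simp only [Option.getD_some] at hy1 hy2
    exact ⟨y, Finset.mem_inter.2 ⟨hy1, hy2⟩⟩
  · rwa [List.head?_append_of_ne_nil _ hne1]
  · rwa [List.getLast?_append_of_ne_nil _ hne2]

end ConnLemmas
section ConnLemmas2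

variable {V : Type} [DecidableEq V] {E : Finset (Finset V)} {x y z : V}

lemma chainL_truncate (e₀ : Finset V) :
    ∀ (L : List (Finset V)) (x : V), ChainL E x y L →
      x ∈ e₀ ∨ ∃ z L', ChainL (E.erase e₀) x z L' ∧ (z ∈ e₀ ∨ z = y) := by
  intro L
  induction L with
  | nil => intro x h; exact absurd rfl h.1
  | cons e L' ih =>
    intro x h
    obtain ⟨-, hmem, hch, hx, hy⟩ := h
    simp only [List.head?_cons, Option.getD_some] at hx
    by_cases he : e = e₀
    · left; rwa [he] at hx
    have heE : e ∈ E.erase e₀ :=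
      Finset.mem_erase.2 ⟨he, hmem e List.mem_cons_self⟩
    cases L' with
    | nil =>
      right
      refine ⟨y, [e], ⟨by simp, by simpa using heE, List.isChain_singleton _, by simpa using hx, ?_⟩, Or.inr rfl⟩
      simpa using hy
    | cons e' L'' =>
      obtain ⟨hrel, hch'⟩ := List.isChain_cons_cons.1 hch
      obtain ⟨z₁, hz₁⟩ := hrel
      rw [Finset.mem_inter] at hz₁
      have hgl : (e :: e' :: L'').getLast? = (e' :: L'').getLast? :=
        List.getLast?_cons_cons
      rw [hgl] at hy
      have hch2 : ChainL E z₁ y (e' :: L'') :=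
        ⟨by simp, fun f hf => hmem f (List.mem_cons_of_mem _ hf), hch',
          by simpa using hz₁.2, hy⟩
      rcases ih z₁ hch2 with hz₀ | ⟨z, L₂, hc2, hz⟩
      · right
        exact ⟨z₁, [e], ⟨by simp, by simpa using heE, List.isChain_singleton _, by simpa using hx,
          by simpa using hz₁.1⟩, Or.inl hz₀⟩
      · right
        obtain ⟨hne₂, hmem₂, hch₂, hhead₂, hlast₂⟩ := hc2
        obtain ⟨a, as, rfl⟩ := List.exists_cons_of_ne_nil hne₂
        refine ⟨z, e :: a :: as, ⟨by simp, ?_, ?_, by simpa using hx, ?_⟩, hz⟩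
        · intro f hf
          rcases List.mem_cons.1 hf with rfl | hf
          · exact heE
          · exact hmem₂ f hf
        · refine List.isChain_cons_cons.2 ⟨?_, hch₂⟩
          simp only [List.head?_cons, Option.getD_some] at hhead₂
          exact ⟨z₁, Finset.mem_inter.2 ⟨hz₁.1, hhead₂⟩⟩
        · rwa [List.getLast?_cons_cons]

lemma conn_truncate (h : ConnIn E x y) (e₀ : Finset V) :
    x ∈ e₀ ∨ ∃ z, ConnIn (E.erase e₀) x z ∧ (z ∈ e₀ ∨ z = y) := by
  rw [connIn_iff_chainL] at h
  obtain ⟨L, hL⟩ := h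
  rcases chainL_truncate e₀ L x hL with h | ⟨z, L', hc, hz⟩
  · exact Or.inl h
  · exact Or.inr ⟨z, connIn_iff_chainL.2 ⟨L', hc⟩, hz⟩

lemma conn_map {W : Type} [DecidableEq W] (φ : V → W) (h : ConnIn E x y) :
    ConnIn (E.image (Finset.image φ)) (φ x) (φ y) := by
  obtain ⟨t, c, hc, hx, hy, hi⟩ := h
  refine ⟨t, fun i => (c i).image φ, fun i => Finset.mem_image_of_mem _ (hc i),
    Finset.mem_image_of_mem _ hx, Finset.mem_image_of_mem _ hy, fun i => ?_⟩
  obtain ⟨b, hb⟩ := hi i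
  rw [Finset.mem_inter] at hb
  exact ⟨φ b, Finset.mem_inter.2 ⟨Finset.mem_image_of_mem _ hb.1, Finset.mem_image_of_mem _ hb.2⟩⟩

lemma conn_of_map {W : Type} [DecidableEq W] (φ : V → W) {A : Finset V}
    (hA : ∀ e ∈ E, e ⊆ A) (hφ : Set.InjOn φ (A : Set V)) (hx : x ∈ A) (hy : y ∈ A)
    (h : ConnIn (E.image (Finset.image φ)) (φ x) (φ y)) : ConnIn E x y := by
  obtain ⟨t, c, hc, hx', hy', hi⟩ := h
  choose d hd hde using fun i => Finset.mem_image.1 (hc i)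
  refine ⟨t, d, hd, ?_, ?_, fun i => ?_⟩
  · rw [← hde 0] at hx'
    obtain ⟨a, ha, hax⟩ := Finset.mem_image.1 hx'
    rwa [← hφ (hA _ (hd 0) ha) hx hax]
  · rw [← hde (Fin.last t)] at hy'
    obtain ⟨a, ha, hay⟩ := Finset.mem_image.1 hy'
    rwa [← hφ (hA _ (hd _) ha) hy hay]
  · obtain ⟨b, hb⟩ := hi i
    rw [← hde i.castSucc, ← hde i.succ, Finset.mem_inter] at hb
    obtain ⟨a₁, ha₁, rfl⟩ := Finset.mem_image.1 hb.1
    obtain ⟨a₂, ha₂, ha₂₁⟩ := Finset.mem_image.1 hb.2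
    have : a₂ = a₁ := hφ (hA _ (hd i.succ) ha₂) (hA _ (hd i.castSucc) ha₁) ha₂₁
    subst this
    exact ⟨a₂, Finset.mem_inter.2 ⟨ha₁, ha₂⟩⟩

end ConnLemmas2
section CardLemma

variable {V : Type} [DecidableEq V]

lemma sup_card_le : ∀ (E : Finset (Finset V)) (S : Finset V),
    (∀ e ∈ E, ∃ x ∈ e, ∃ y ∈ S, ConnIn E x y) →
    (S ∪ E.sup id).card ≤ S.card + ∑ e ∈ E, (e.card - 1) := by
  intro E
  induction E using Finset.strongInduction with
  | _ E ih =>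
    intro S h
    rcases E.eq_empty_or_nonempty with rfl | ⟨e₁, he₁⟩
    · simp
    · obtain ⟨x₀, hx₀, y₀, hy₀, hconn⟩ := h e₁ he₁
      obtain ⟨estar, hestar, hyestar⟩ := conn_last_edge hconn
      set E₁ := E.erase estar with hE₁
      have hsub : E₁ ⊂ E := Finset.erase_ssubset hestar
      have hstep : ∀ e ∈ E₁, ∃ x ∈ e, ∃ y ∈ S ∪ estar, ConnIn E₁ x y := by
        intro e he
        have heE : e ∈ E := Finset.mem_of_mem_erase he
        have hne : e ≠ estar := (Finset.mem_erase.1 he).1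
        obtain ⟨x, hx, y, hy, hc⟩ := h e heE
        rcases conn_truncate hc estar with hxe | ⟨z, hz, hz'⟩
        · exact ⟨x, hx, x, Finset.mem_union_right _ hxe,
            conn_single (Finset.mem_erase.2 ⟨hne, heE⟩) hx hx⟩
        · refine ⟨x, hx, z, ?_, hz⟩
          rcases hz' with h1 | rfl
          · exact Finset.mem_union_right _ h1
          · exact Finset.mem_union_left _ hy
      have key := ih E₁ hsub (S ∪ estar) hstep
      have hset : S ∪ E.sup id = (S ∪ estar) ∪ E₁.sup id := by
        have h2 : E.sup id = estar ∪ E₁.sup id := by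
          conv_lhs => rw [← Finset.insert_erase hestar]
          rw [Finset.sup_insert]
          rfl
        rw [h2, ← Finset.union_assoc]
      have hcard1 : (S ∪ estar).card ≤ S.card + (estar.card - 1) := by
        have h1 : estar \ S ⊆ estar.erase y₀ := by
          intro a ha
          rw [Finset.mem_sdiff] at ha
          exact Finset.mem_erase.2 ⟨fun hay => ha.2 (hay ▸ hy₀), ha.1⟩
        calc (S ∪ estar).card = (S ∪ (estar \ S)).card := by rw [Finset.union_sdiff_self_eq_union]
          _ ≤ S.card + (estar \ S).card := Finset.card_union_le _ _
          _ ≤ S.card + (estar.erase y₀).card := by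
              exact Nat.add_le_add_left (Finset.card_le_card h1) _
          _ = S.card + (estar.card - 1) := by rw [Finset.card_erase_of_mem hyestar]
      have hsum : ∑ e ∈ E, (e.card - 1) = (estar.card - 1) + ∑ e ∈ E₁, (e.card - 1) := by
        conv_lhs => rw [← Finset.insert_erase hestar]
        rw [Finset.sum_insert (Finset.notMem_erase _ _)]
      rw [hset, hsum]
      calc ((S ∪ estar) ∪ E₁.sup id).card
          ≤ (S ∪ estar).card + ∑ e ∈ E₁, (e.card - 1) := key
        _ ≤ S.card + ((estar.card - 1) + ∑ e ∈ E₁, (e.card - 1)) := by omega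

end CardLemma
section WalkBasics

variable {q l : ℕ} {w : WalkData ℕ l}

lemma mem_edgeSet_iff {e : Finset ℕ} : e ∈ edgeSet w ↔ ∃ i, w.2 i = e := by
  simp [edgeSet, eq_comm]

lemma step_mem_edgeSet (i : Fin l) : w.2 i ∈ edgeSet w :=
  mem_edgeSet_iff.2 ⟨i, rfl⟩

lemma vert_mem_visited (i : Fin (l + 1)) : w.1 i ∈ visited w :=
  Finset.mem_image_of_mem _ (Finset.mem_univ _)

lemma firstEdge_eq (hl : 0 < l) : firstEdge w = w.2 ⟨0, hl⟩ := dif_pos hl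

lemma firstEdge_mem_edgeSet (hl : 0 < l) : firstEdge w ∈ edgeSet w := by
  rw [firstEdge_eq hl]; exact step_mem_edgeSet _

lemma castSucc_zero' (hl : 0 < l) : (Fin.castSucc (⟨0, hl⟩ : Fin l)) = (0 : Fin (l + 1)) := rfl

lemma root_mem_firstEdge (hw : IsClosedWalk q l w) (hl : 0 < l) : w.1 0 ∈ firstEdge w := by
  rw [firstEdge_eq hl]
  have := (hw.2.2 ⟨0, hl⟩).1
  rwa [castSucc_zero' hl] at this

lemma edge_card (hw : IsClosedWalk q l w) {e : Finset ℕ} (he : e ∈ edgeSet w) : e.card = q := by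
  obtain ⟨i, rfl⟩ := mem_edgeSet_iff.1 he
  exact hw.2.1 i

lemma visited_subset_sup (hw : IsClosedWalk q l w) (hl : 0 < l) :
    visited w ⊆ Finset.univ.sup w.2 := by
  intro x hx
  obtain ⟨i, -, rfl⟩ := Finset.mem_image.1 hx
  rcases Nat.lt_or_ge (i : ℕ) l with h | h
  · have h1 : w.1 i ∈ w.2 ⟨i, h⟩ := by
      have := (hw.2.2 ⟨i, h⟩).1
      have h2 : (Fin.castSucc (⟨(i : ℕ), h⟩ : Fin l)) = i := by
        ext; rfl
      rwa [h2] at this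
    exact Finset.mem_sup.2 ⟨⟨(i : ℕ), h⟩, Finset.mem_univ _, h1⟩
  · have h1 : i = Fin.last l := by
      ext; simp only [Fin.val_last]; omega
    rw [h1, hw.1]
    have h2 := root_mem_firstEdge hw hl
    rw [firstEdge_eq hl] at h2
    exact Finset.mem_sup.2 ⟨_, Finset.mem_univ _, h2⟩

lemma vertSet_eq_sup (hw : IsClosedWalk q l w) (hl : 0 < l) :
    vertSet w = Finset.univ.sup w.2 :=
  Finset.union_eq_left.2 (visited_subset_sup hw hl)

lemma sup_eq_edgeSet_sup : Finset.univ.sup w.2 = (edgeSet w).sup id := by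
  rw [edgeSet, Finset.sup_image]
  rfl

lemma edge_subset_vertSet {e : Finset ℕ} (he : e ∈ edgeSet w) : e ⊆ vertSet w := by
  intro x hx
  obtain ⟨i, rfl⟩ := mem_edgeSet_iff.1 he
  exact Finset.mem_union_left _ (Finset.mem_sup.2 ⟨i, Finset.mem_univ _, hx⟩)

lemma visited_subset_vertSet : visited w ⊆ vertSet w := Finset.subset_union_right

/-- Key structural fact: in the (hypertree) skeleton of an essential walk, two distinct
vertices of the first hyperedge are not connected avoiding the first hyperedge. -/
lemma no_shortcut (hw : IsEssential q w) (hq : 2 ≤ q) (hl : 0 < l) :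
    ∀ x ∈ firstEdge w, ∀ y ∈ firstEdge w, x ≠ y →
      ¬ ConnIn ((edgeSet w).erase (firstEdge w)) x y := by
  intro x hx y hy hxy hconn
  set E := edgeSet w with hE
  set e₀ := firstEdge w with he₀
  set E₁ := E.erase e₀ with hE₁
  set S := e₀.erase y with hS
  have he₀E : e₀ ∈ E := firstEdge_mem_edgeSet hl
  have hxS : x ∈ S := Finset.mem_erase.2 ⟨hxy, hx⟩
  have hcards : ∀ e ∈ E, e.card = q := fun e he => edge_card hw.1 he
  have hvert : ∀ e ∈ E, e ⊆ vertSet w := fun e he => edge_subset_vertSet he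
  -- connectivity hypothesis for sup_card_le
  have hstep : ∀ e ∈ E₁, ∃ a ∈ e, ∃ b ∈ S, ConnIn E₁ a b := by
    intro e he
    have heE : e ∈ E := Finset.mem_of_mem_erase he
    have hene : e.Nonempty := by
      rw [← Finset.card_pos, hcards e heE]; omega
    obtain ⟨z, hz⟩ := hene
    by_cases hzx : z = x
    · exact ⟨z, hz, x, hxS, conn_single he hz (hzx ▸ hz)⟩
    · have hzy' : ConnIn E z x := by
        apply (hw.2.1 z (hvert e heE hz) x (hvert e₀ he₀E hx) hzx)
      rcases conn_truncate hzy' e₀ with hze | ⟨z', hz', hz''⟩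
      · by_cases hzy : z = y
        · exact ⟨z, hz, x, hxS, hzy ▸ conn_symm hconn⟩
        · exact ⟨z, hz, z, Finset.mem_erase.2 ⟨hzy, hze⟩, conn_single he hz hz⟩
      · by_cases hz'y : z' = y
        · exact ⟨z, hz, x, hxS, conn_trans hz' (hz'y ▸ conn_symm hconn)⟩
        · rcases hz'' with h1 | rfl
          · exact ⟨z, hz, z', Finset.mem_erase.2 ⟨hz'y, h1⟩, hz'⟩
          · exact ⟨z, hz, z', hxS, hz'⟩
  have key := sup_card_le E₁ S hstep
  -- vertSet is covered
  have hcover : vertSet w ⊆ S ∪ E₁.sup id := by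
    intro v hv
    rw [vertSet_eq_sup hw.1 hl, sup_eq_edgeSet_sup, ← hE] at hv
    obtain ⟨e, he, hve⟩ := Finset.mem_sup.1 hv
    by_cases hee : e = e₀
    · subst hee
      by_cases hvy : v = y
      · subst hvy
        obtain ⟨elast, helast, hvlast⟩ := conn_last_edge hconn
        exact Finset.mem_union_right _ (Finset.mem_sup.2 ⟨elast, helast, hvlast⟩)
      · exact Finset.mem_union_left _ (Finset.mem_erase.2 ⟨hvy, hve⟩)
    · exact Finset.mem_union_right _
        (Finset.mem_sup.2 ⟨e, Finset.mem_erase.2 ⟨hee, he⟩, hve⟩)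
  have hcardv : (vertSet w).card = (q - 1) * E.card + 1 := hw.2.2
  have hScard : S.card = q - 1 := by
    rw [hS, Finset.card_erase_of_mem hy, hcards e₀ he₀E]
  have hsum : ∑ e ∈ E₁, (e.card - 1) = E₁.card * (q - 1) := by
    rw [Finset.sum_congr rfl fun e he => by
      rw [hcards e (Finset.mem_of_mem_erase he)]]
    simp [Finset.sum_const, Nat.smul_one_eq_cast]
  have hEcard : E.card = E₁.card + 1 := by
    rw [hE₁, Finset.card_erase_of_mem he₀E]
    have : 0 < E.card := Finset.card_pos.2 ⟨e₀, he₀E⟩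
    omega
  have hle : (vertSet w).card ≤ S.card + ∑ e ∈ E₁, (e.card - 1) :=
    le_trans (Finset.card_le_card hcover) key
  rw [hcardv, hScard, hsum, hEcard] at hle
  have hmul : (q - 1) * (E₁.card + 1) = (q-1) * E₁.card + (q-1) := by ring
  rw [hmul] at hle
  have hcomm : E₁.card * (q-1) = (q-1) * E₁.card := Nat.mul_comm _ _
  rw [hcomm] at hle
  omega

end WalkBasics
section EVert

variable {q l : ℕ} {w : WalkData ℕ l} {x y : ℕ}

/-- The sorted list of first-visit times of the visited vertices of the first hyperedge. -/
def LL (w : WalkData ℕ l) : List ℕ :=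
  ((firstEdge w ∩ visited w).image (firstTime w)).sort (· ≤ ·)

lemma eVert_def' (i : ℕ) : eVert w i = vertAt w ((LL w).getD (i - 1) 0) := rfl

lemma firstTime_spec (hx : x ∈ visited w) :
    ∃ h : firstTime w x < l + 1, w.1 ⟨firstTime w x, h⟩ = x := by
  have hne : {j : ℕ | ∃ h : j < l + 1, w.1 ⟨j, h⟩ = x}.Nonempty := by
    obtain ⟨i, -, rfl⟩ := Finset.mem_image.1 hx
    exact ⟨(i : ℕ), i.isLt, by simp [Fin.eta]⟩
  exact Nat.sInf_mem hne

lemma firstTime_le {j : ℕ} (hj : j < l + 1) (hjx : w.1 ⟨j, hj⟩ = x) : firstTime w x ≤ j :=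
  Nat.sInf_le ⟨hj, hjx⟩

lemma firstTime_lt (hx : x ∈ visited w) : firstTime w x < l + 1 := (firstTime_spec hx).1

lemma vertAt_firstTime (hx : x ∈ visited w) : vertAt w (firstTime w x) = x := by
  obtain ⟨h, hx'⟩ := firstTime_spec hx
  rw [vertAt, dif_pos h]
  exact hx'

lemma firstTime_injOn (hx : x ∈ visited w) (hy : y ∈ visited w)
    (hxy : firstTime w x = firstTime w y) : x = y := by
  rw [← vertAt_firstTime hx, ← vertAt_firstTime hy, hxy]

lemma firstTime_root : firstTime w (w.1 0) = 0 := by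
  refine Nat.le_antisymm ?_ (Nat.zero_le _)
  refine firstTime_le (Nat.succ_pos l) ?_
  congr 1

lemma length_LL : (LL w).length = kappa w := by
  rw [LL, Finset.length_sort, kappa]
  apply Finset.card_image_of_injOn
  intro a ha b hb hab
  exact firstTime_injOn (Finset.mem_inter.1 ha).2 (Finset.mem_inter.1 hb).2 hab

lemma eVert_spec {i : ℕ} (hi1 : 1 ≤ i) (hik : i ≤ kappa w) :
    eVert w i ∈ firstEdge w ∩ visited w ∧
      (LL w).getD (i - 1) 0 = firstTime w (eVert w i) := by
  have hlen : i - 1 < (LL w).length := by rw [length_LL]; omega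
  have hmem : (LL w).getD (i - 1) 0 ∈ LL w := by
    rw [List.getD_eq_get _ _ ⟨_, hlen⟩]
    exact List.get_mem _ _
  have h2 : (LL w).getD (i - 1) 0 ∈ (firstEdge w ∩ visited w).image (firstTime w) :=
    (Finset.mem_sort _).1 hmem
  obtain ⟨x, hxT, hxft⟩ := Finset.mem_image.1 h2
  have hxv : x ∈ visited w := (Finset.mem_inter.1 hxT).2
  have h3 : eVert w i = x := by
    rw [eVert_def', ← hxft, vertAt_firstTime hxv]
  rw [h3]
  exact ⟨hxT, hxft.symm⟩

lemma eVert_mem {i : ℕ} (hi1 : 1 ≤ i) (hik : i ≤ kappa w) :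
    eVert w i ∈ firstEdge w ∩ visited w := (eVert_spec hi1 hik).1

lemma eVert_mem_visited {i : ℕ} (hi1 : 1 ≤ i) (hik : i ≤ kappa w) :
    eVert w i ∈ visited w := (Finset.mem_inter.1 (eVert_mem hi1 hik)).2

lemma eVert_injOn {i j : ℕ} (hi1 : 1 ≤ i) (hik : i ≤ kappa w) (hj1 : 1 ≤ j)
    (hjk : j ≤ kappa w) (hij : eVert w i = eVert w j) : i = j := by
  have hsi := (eVert_spec hi1 hik).2
  have hsj := (eVert_spec hj1 hjk).2
  rw [hij] at hsi
  have heq : (LL w).getD (i - 1) 0 = (LL w).getD (j - 1) 0 := by rw [hsi, hsj]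
  have hlen_i : i - 1 < (LL w).length := by rw [length_LL]; omega
  have hlen_j : j - 1 < (LL w).length := by rw [length_LL]; omega
  rw [List.getD_eq_get _ _ ⟨_, hlen_i⟩, List.getD_eq_get _ _ ⟨_, hlen_j⟩] at heq
  have hnd : (LL w).Nodup := Finset.sort_nodup _ _
  have h3 := (List.Nodup.get_inj_iff hnd).1 heq
  have h4 : i - 1 = j - 1 := congrArg Fin.val h3
  omega

lemma eVert_surjOn (hx : x ∈ firstEdge w ∩ visited w) :
    ∃ i, 1 ≤ i ∧ i ≤ kappa w ∧ eVert w i = x := by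
  have h1 : firstTime w x ∈ LL w :=
    (Finset.mem_sort _).2 (Finset.mem_image_of_mem _ hx)
  obtain ⟨k, hk⟩ := List.mem_iff_get.1 h1
  refine ⟨(k : ℕ) + 1, Nat.le_add_left _ _, ?_, ?_⟩
  · have h5 : (k : ℕ) < kappa w := lt_of_lt_of_le k.isLt (le_of_eq length_LL)
    omega
  · rw [eVert_def']
    have h2 : ((k : ℕ) + 1) - 1 = (k : ℕ) := by omega
    rw [h2, List.getD_eq_get _ _ k]
    simp only [Fin.eta, hk]
    exact vertAt_firstTime (Finset.mem_inter.1 hx).2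

lemma root_mem_inter (hw : IsClosedWalk q l w) (hl : 0 < l) :
    w.1 0 ∈ firstEdge w ∩ visited w :=
  Finset.mem_inter.2 ⟨root_mem_firstEdge hw hl, vert_mem_visited 0⟩

lemma kappa_pos (hw : IsClosedWalk q l w) (hl : 0 < l) : 0 < kappa w :=
  Finset.card_pos.2 ⟨w.1 0, root_mem_inter hw hl⟩

lemma kappa_le (hw : IsClosedWalk q l w) (hl : 0 < l) : kappa w ≤ q := by
  rw [kappa]
  calc (firstEdge w ∩ visited w).card ≤ (firstEdge w).card :=
        Finset.card_le_card Finset.inter_subset_left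
    _ = q := edge_card hw (firstEdge_mem_edgeSet hl)

lemma eVert_one (hw : IsClosedWalk q l w) (hl : 0 < l) : eVert w 1 = w.1 0 := by
  have hroot : firstTime w (w.1 0) ∈ LL w :=
    (Finset.mem_sort _).2 (Finset.mem_image_of_mem _ (root_mem_inter hw hl))
  rw [firstTime_root] at hroot
  have hk : 0 < kappa w := kappa_pos hw hl
  have hlen : 0 < (LL w).length := by rw [length_LL]; omega
  have hget0 : (LL w).getD 0 0 = 0 := by
    rw [List.getD_eq_get _ _ ⟨_, hlen⟩]
    obtain ⟨k, hk'⟩ := List.mem_iff_get.1 hroot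
    have hsorted : (LL w).Pairwise (· ≤ ·) := Finset.pairwise_sort _ _
    rcases Nat.eq_zero_or_pos (k : ℕ) with h0 | h0
    · have h6 : (⟨0, hlen⟩ : Fin (LL w).length) = k := by
        apply Fin.ext
        simp [h0]
      rw [h6, hk']
    · have h1 : (LL w).get ⟨0, hlen⟩ ≤ (LL w).get k := by
        apply List.Pairwise.rel_get_of_lt hsorted
        simpa [Fin.lt_def] using h0
      rw [hk'] at h1
      omega
  rw [eVert_def']
  have h7 : (1 : ℕ) - 1 = 0 := rfl
  rw [h7, hget0, vertAt, dif_pos (Nat.succ_pos l)]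
  congr 1

end EVert
section Counting

variable {q l : ℕ} {w : WalkData ℕ l}

/-- Index of a visited first-edge vertex in the `eVert` enumeration. -/
def vidx (w : WalkData ℕ l) (x : ℕ) : ℕ :=
  if hx : x ∈ firstEdge w ∩ visited w then Classical.choose (eVert_surjOn hx) else 1

lemma vidx_spec {x : ℕ} (hx : x ∈ firstEdge w ∩ visited w) :
    1 ≤ vidx w x ∧ vidx w x ≤ kappa w ∧ eVert w (vidx w x) = x := by
  rw [vidx, dif_pos hx]
  exact Classical.choose_spec (eVert_surjOn hx)

lemma vidx_eVert {i : ℕ} (hi1 : 1 ≤ i) (hik : i ≤ kappa w) : vidx w (eVert w i) = i := by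
  obtain ⟨h1, h2, h3⟩ := vidx_spec (eVert_mem hi1 hik)
  exact eVert_injOn h1 h2 hi1 hik h3

lemma depart_mem (hw : IsClosedWalk q l w) (t : Fin l) : w.1 t.castSucc ∈ w.2 t :=
  (hw.2.2 t).1

lemma arrive_mem (hw : IsClosedWalk q l w) (t : Fin l) : w.1 t.succ ∈ w.2 t :=
  (hw.2.2 t).2

/-- Every step outside the first hyperedge lies in some component `G_i`. -/
lemma exists_comp (hw : IsClosedWalk q l w) (hl : 0 < l) :
    ∀ n : ℕ, ∀ t : Fin l, (t : ℕ) = n → w.2 t ≠ firstEdge w →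
      ∃ i, 1 ≤ i ∧ i ≤ kappa w ∧ inComp w i t := by
  intro n
  induction n using Nat.strong_induction_on with
  | _ n ih =>
    intro t ht hne
    have htE : w.2 t ∈ (edgeSet w).erase (firstEdge w) :=
      Finset.mem_erase.2 ⟨hne, step_mem_edgeSet t⟩
    have hn0 : n ≠ 0 := by
      rintro rfl
      have h0 : t = ⟨0, hl⟩ := Fin.ext (by simpa using ht)
      exact hne (by rw [firstEdge_eq hl, h0])
    have hn_lt : n < l := ht ▸ t.isLt
    set t' : Fin l := ⟨n - 1, by omega⟩ with ht'
    have hsucc : t'.succ = t.castSucc := by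
      apply Fin.ext
      simp [ht', Fin.val_succ, ht]
      omega
    have hdep : w.1 t.castSucc ∈ w.2 t' := by
      rw [← hsucc]
      exact arrive_mem hw t'
    by_cases hE : w.2 t' = firstEdge w
    · have hmem : w.1 t.castSucc ∈ firstEdge w ∩ visited w :=
        Finset.mem_inter.2 ⟨hE ▸ hdep, vert_mem_visited _⟩
      obtain ⟨i, hi1, hik, hiv⟩ := eVert_surjOn hmem
      refine ⟨i, hi1, hik, hne, w.1 t.castSucc, depart_mem hw t, ?_⟩
      rw [hiv]
      exact conn_single htE (depart_mem hw t) (depart_mem hw t)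
    · obtain ⟨i, hi1, hik, hic⟩ := ih (n - 1) (by omega) t' rfl hE
      obtain ⟨-, x, hx, hconn⟩ := hic
      have ht'E : w.2 t' ∈ (edgeSet w).erase (firstEdge w) :=
        Finset.mem_erase.2 ⟨hE, step_mem_edgeSet t'⟩
      refine ⟨i, hi1, hik, hne, w.1 t.castSucc, depart_mem hw t, ?_⟩
      exact conn_trans (conn_single ht'E hdep hx) hconn

/-- The component of a step is unique. -/
lemma comp_unique (hw : IsEssential q w) (hq : 2 ≤ q) (hl : 0 < l) {t : Fin l} {i j : ℕ}
    (hi1 : 1 ≤ i) (hik : i ≤ kappa w) (hj1 : 1 ≤ j) (hjk : j ≤ kappa w)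
    (hi : inComp w i t) (hj : inComp w j t) : i = j := by
  by_contra hij
  have hne : eVert w i ≠ eVert w j := fun h => hij (eVert_injOn hi1 hik hj1 hjk h)
  obtain ⟨hte, x, hx, hcx⟩ := hi
  obtain ⟨-, y, hy, hcy⟩ := hj
  have htE : w.2 t ∈ (edgeSet w).erase (firstEdge w) :=
    Finset.mem_erase.2 ⟨hte, step_mem_edgeSet t⟩
  have hconn : ConnIn ((edgeSet w).erase (firstEdge w)) (eVert w i) (eVert w j) :=
    conn_trans (conn_symm hcx) (conn_trans (conn_single htE hx hy) hcy)
  exact no_shortcut hw hq hl _ (Finset.mem_inter.1 (eVert_mem hi1 hik)).1 _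
    (Finset.mem_inter.1 (eVert_mem hj1 hjk)).1 hne hconn

/-- Exit lemma: each visited first-edge vertex has a first-edge step departing from it. -/
lemma fSteps_pos (hw : IsEssential q w) (hq : 2 ≤ q) (hl : 0 < l) {i : ℕ}
    (hi1 : 1 ≤ i) (hik : i ≤ kappa w) : 0 < fSteps w i := by
  set x := eVert w i with hx
  have hxT : x ∈ firstEdge w ∩ visited w := eVert_mem hi1 hik
  have hxe : x ∈ firstEdge w := (Finset.mem_inter.1 hxT).1
  have hxv : x ∈ visited w := (Finset.mem_inter.1 hxT).2
  rw [fSteps, Finset.card_pos]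
  by_cases hroot : x = w.1 0
  · refine ⟨⟨0, hl⟩, Finset.mem_filter.2 ⟨Finset.mem_univ _, (firstEdge_eq hl).symm, ?_⟩⟩
    rw [castSucc_zero' hl, ← hroot]
  · -- the component-exit argument
    set E₁ := (edgeSet w).erase (firstEdge w) with hE₁
    set InA : ℕ → Prop := fun z => z = x ∨ ConnIn E₁ z x with hInA
    have hrootA : ¬ InA (w.1 0) := by
      rintro (h | h)
      · exact hroot h.symm
      · exact no_shortcut hw hq hl _ (root_mem_firstEdge hw.1 hl) _ hxe
          (fun hh => hroot hh.symm) h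
    set j := firstTime w x with hj
    have hjl : j < l + 1 := firstTime_lt hxv
    have hvj : vertAt w j = x := vertAt_firstTime hxv
    have hjl' : j < l := by
      rcases Nat.lt_or_ge j l with h | h
      · exact h
      · exfalso
        have hjeq : j = l := by omega
        apply hroot
        rw [← hvj, hjeq, vertAt, dif_pos (Nat.lt_succ_self l)]
        have : (⟨l, Nat.lt_succ_self l⟩ : Fin (l + 1)) = Fin.last l := rfl
        rw [this, hw.1.1]
    set B := (Finset.range (l + 1)).filter (fun m => j ≤ m ∧ ¬ InA (vertAt w m)) with hB
    have hlB : l ∈ B := by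
      refine Finset.mem_filter.2 ⟨Finset.mem_range.2 (Nat.lt_succ_self l), by omega, ?_⟩
      have : vertAt w l = w.1 0 := by
        rw [vertAt, dif_pos (Nat.lt_succ_self l)]
        have h9 : (⟨l, Nat.lt_succ_self l⟩ : Fin (l + 1)) = Fin.last l := rfl
        rw [h9, hw.1.1]
      rw [this]
      exact hrootA
    have hBne : B.Nonempty := ⟨l, hlB⟩
    set m₀ := B.min' hBne with hm₀
    have hm₀B : m₀ ∈ B := B.min'_mem hBne
    obtain ⟨hm₀r, hm₀j, hm₀A⟩ := Finset.mem_filter.1 hm₀B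
    rw [Finset.mem_range] at hm₀r
    have hjA : InA (vertAt w j) := by rw [hvj]; exact Or.inl rfl
    have hjm : j < m₀ := by
      rcases Nat.lt_or_ge j m₀ with h | h
      · exact h
      · have h1 : m₀ = j := by omega
        rw [h1] at hm₀A
        exact absurd hjA hm₀A
    have hm₁A : InA (vertAt w (m₀ - 1)) := by
      by_contra hcon
      have h1 : m₀ - 1 ∈ B := by
        refine Finset.mem_filter.2 ⟨Finset.mem_range.2 (by omega), by omega, hcon⟩
      have := B.min'_le _ h1
      omega
    set t : Fin l := ⟨m₀ - 1, by omega⟩ with htdef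
    have hdep : w.1 t.castSucc = vertAt w (m₀ - 1) := by
      rw [vertAt, dif_pos (show m₀ - 1 < l + 1 by omega)]
      rfl
    have harr : w.1 t.succ = vertAt w m₀ := by
      have h9 : t.succ = (⟨m₀, hm₀r⟩ : Fin (l + 1)) := by
        apply Fin.ext
        simp only [Fin.val_succ, htdef]
        omega
      rw [vertAt, dif_pos (show m₀ < l + 1 from hm₀r), h9]
    have hedge : w.2 t = firstEdge w := by
      by_contra hne2
      have htE : w.2 t ∈ E₁ := Finset.mem_erase.2 ⟨hne2, step_mem_edgeSet t⟩
      apply hm₀A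
      have h1 : ConnIn E₁ (w.1 t.succ) (w.1 t.castSucc) :=
        conn_single htE (arrive_mem hw.1 t) (depart_mem hw.1 t)
      have hdA : InA (w.1 t.castSucc) := by rw [hdep]; exact hm₁A
      rw [← harr]
      rcases hdA with h | h
      · exact Or.inr (h ▸ h1)
      · exact Or.inr (conn_trans h1 h)
    have hdx : w.1 t.castSucc = x := by
      have hdepe : w.1 t.castSucc ∈ firstEdge w := hedge ▸ depart_mem hw.1 t
      have hdA : InA (w.1 t.castSucc) := by rw [hdep]; exact hm₁A
      by_cases hdx0 : w.1 t.castSucc = x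
      · exact hdx0
      · exfalso
        rcases hdA with h | h
        · exact hdx0 h
        · exact no_shortcut hw hq hl _ hdepe _ hxe hdx0 h
    exact ⟨t, Finset.mem_filter.2 ⟨Finset.mem_univ _, hedge, by rw [hdx, hx]⟩⟩

end Counting
section Counting2

variable {q l : ℕ} {w : WalkData ℕ l}

lemma fSteps_le (i : ℕ) : fSteps w i ≤ l :=
  (Finset.card_filter_le _ _).trans (by simp)

lemma uSteps_le (i : ℕ) : uSteps w i ≤ l :=
  (Finset.card_filter_le _ _).trans (by simp)

lemma vSteps_le_uSteps (i : ℕ) : vSteps w i ≤ uSteps w i := by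
  apply Finset.card_le_card
  intro t ht
  rw [Finset.mem_filter] at ht ⊢
  exact ⟨ht.1, ht.2.1⟩

lemma vSteps_le (i : ℕ) : vSteps w i ≤ l := (vSteps_le_uSteps i).trans (uSteps_le i)

lemma exists_comp' (hw : IsClosedWalk q l w) (hl : 0 < l) {t : Fin l}
    (ht : w.2 t ≠ firstEdge w) : ∃ i, 1 ≤ i ∧ i ≤ kappa w ∧ inComp w i t :=
  exists_comp hw hl (t : ℕ) t rfl ht

lemma sum_fSteps (hw : IsClosedWalk q l w) (hl : 0 < l) :
    ∑ i : Fin (kappa w), fSteps w ((i : ℕ) + 1) =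
      (Finset.univ.filter fun t : Fin l => w.2 t = firstEdge w).card := by
  have hκ : 0 < kappa w := kappa_pos hw hl
  set G : Fin l → Fin (kappa w) :=
    fun t => ⟨(vidx w (w.1 t.castSucc) - 1) % kappa w, Nat.mod_lt _ hκ⟩ with hG
  rw [Finset.card_eq_sum_card_fiberwise
    (f := G) (t := Finset.univ) (fun t _ => Finset.mem_univ _)]
  apply Finset.sum_congr rfl
  intro b _
  rw [fSteps]
  congr 1
  ext t
  simp only [Finset.mem_filter, Finset.mem_univ, true_and]
  constructor
  · rintro ⟨ht1, hdep⟩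
    have hb1 : 1 ≤ (b : ℕ) + 1 := by omega
    have hbk : (b : ℕ) + 1 ≤ kappa w := by have := b.isLt; omega
    have h7 : vidx w (w.1 t.castSucc) = (b : ℕ) + 1 := by
      rw [hdep]
      exact vidx_eVert hb1 hbk
    refine ⟨ht1, ?_⟩
    apply Fin.ext
    simp only [hG, h7]
    simp [Nat.mod_eq_of_lt (show (b:ℕ) < kappa w from b.isLt)]
  · rintro ⟨ht1, hGb⟩
    have hm : w.1 t.castSucc ∈ firstEdge w ∩ visited w :=
      Finset.mem_inter.2 ⟨ht1 ▸ depart_mem hw t, vert_mem_visited _⟩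
    obtain ⟨h1, h2, h3⟩ := vidx_spec hm
    have h4 : (vidx w (w.1 t.castSucc) - 1) % kappa w = vidx w (w.1 t.castSucc) - 1 :=
      Nat.mod_eq_of_lt (by omega)
    have h5 : vidx w (w.1 t.castSucc) - 1 = (b : ℕ) := by
      have := congrArg Fin.val hGb
      simp only [hG] at this
      rw [h4] at this
      exact this
    have h6 : vidx w (w.1 t.castSucc) = (b : ℕ) + 1 := by omega
    rw [h6] at h3
    exact ⟨ht1, h3.symm⟩

lemma sum_uSteps (hw : IsEssential q w) (hq : 2 ≤ q) (hl : 0 < l) :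
    ∑ i : Fin (kappa w), uSteps w ((i : ℕ) + 1) =
      (Finset.univ.filter fun t : Fin l => w.2 t ≠ firstEdge w).card := by
  have hκ : 0 < kappa w := kappa_pos hw.1 hl
  classical
  set cidx : Fin l → ℕ := fun t =>
    if h : ∃ i, 1 ≤ i ∧ i ≤ kappa w ∧ inComp w i t then Classical.choose h else 1 with hcidx
  set G : Fin l → Fin (kappa w) := fun t => ⟨(cidx t - 1) % kappa w, Nat.mod_lt _ hκ⟩ with hG
  rw [Finset.card_eq_sum_card_fiberwise
    (f := G) (t := Finset.univ) (fun t _ => Finset.mem_univ _)]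
  apply Finset.sum_congr rfl
  intro b _
  have hb1 : 1 ≤ (b : ℕ) + 1 := by omega
  have hbk : (b : ℕ) + 1 ≤ kappa w := by have := b.isLt; omega
  rw [uSteps]
  congr 1
  ext t
  simp only [Finset.mem_filter, Finset.mem_univ, true_and]
  constructor
  · intro hic
    have ht1 : w.2 t ≠ firstEdge w := hic.1
    have hex : ∃ i, 1 ≤ i ∧ i ≤ kappa w ∧ inComp w i t := ⟨(b : ℕ) + 1, hb1, hbk, hic⟩
    obtain ⟨h1, h2, h3⟩ := Classical.choose_spec hex
    have h4 : Classical.choose hex = (b : ℕ) + 1 :=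
      comp_unique hw hq hl h1 h2 hb1 hbk h3 hic
    have h5 : cidx t = (b : ℕ) + 1 := by
      rw [hcidx]
      simp only [hex, dif_pos]
      exact h4
    refine ⟨ht1, ?_⟩
    apply Fin.ext
    simp only [hG, h5]
    simp [Nat.mod_eq_of_lt (show (b:ℕ) < kappa w from b.isLt)]
  · rintro ⟨ht1, hGb⟩
    have hex : ∃ i, 1 ≤ i ∧ i ≤ kappa w ∧ inComp w i t := exists_comp' hw.1 hl ht1
    obtain ⟨h1, h2, h3⟩ := Classical.choose_spec hex
    have h4 : cidx t = Classical.choose hex := by rw [hcidx]; simp [hex]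
    have h5 : cidx t - 1 = (b : ℕ) := by
      have := congrArg Fin.val hGb
      simp only [hG] at this
      rwa [Nat.mod_eq_of_lt (by omega)] at this
    have h6 : Classical.choose hex = (b : ℕ) + 1 := by omega
    rw [h6] at h3
    exact h3

lemma steps_split :
    (Finset.univ.filter fun t : Fin l => w.2 t = firstEdge w).card +
      (Finset.univ.filter fun t : Fin l => w.2 t ≠ firstEdge w).card = l := by
  rw [Finset.card_filter_add_card_filter_not]
  simp

lemma root_split (hw : IsEssential q w) (hl : 0 < l) :
    rootSteps w = fSteps w 1 + vSteps w 1 := by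
  have h1 : eVert w 1 = w.1 0 := eVert_one hw.1 hl
  have key := Finset.card_filter_add_card_filter_not
    (s := Finset.univ.filter fun t : Fin l => w.1 t.castSucc = w.1 0)
    (p := fun t => w.2 t = firstEdge w)
  rw [Finset.filter_filter, Finset.filter_filter] at key
  have hf : fSteps w 1 =
      (Finset.univ.filter fun t : Fin l =>
        w.1 t.castSucc = w.1 0 ∧ w.2 t = firstEdge w).card := by
    rw [fSteps]
    congr 1
    ext t
    simp only [Finset.mem_filter, Finset.mem_univ, true_and, h1]
    tauto
  have hv : vSteps w 1 =
      (Finset.univ.filter fun t : Fin l =>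
        w.1 t.castSucc = w.1 0 ∧ ¬ w.2 t = firstEdge w).card := by
    rw [vSteps]
    congr 1
    ext t
    simp only [Finset.mem_filter, Finset.mem_univ, true_and, h1]
    constructor
    · rintro ⟨hic, hd⟩
      exact ⟨hd, hic.1⟩
    · rintro ⟨hd, hne⟩
      refine ⟨⟨hne, w.1 0, ?_, ?_⟩, hd⟩
      · exact hd ▸ depart_mem hw.1 t
      · rw [h1]
        exact conn_single (Finset.mem_erase.2 ⟨hne, step_mem_edgeSet t⟩)
          (hd ▸ depart_mem hw.1 t) (hd ▸ depart_mem hw.1 t)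
  rw [rootSteps, ← key, hf, hv]

end Counting2
section EquivBasic

variable {V : Type} [DecidableEq V] {k : ℕ} {w₁ w₂ : WalkData V k} {φ : V → V}

lemma edge_subset_vertSet' (w : WalkData V k) (i : Fin k) : w.2 i ⊆ vertSet w :=
  fun x hx => Finset.mem_union_left _ (Finset.mem_sup.2 ⟨i, Finset.mem_univ _, hx⟩)

lemma visited_subset_vertSet' (w : WalkData V k) : visited w ⊆ vertSet w :=
  Finset.subset_union_right

lemma image_inj_aux {A : Finset V} (hinj : Set.InjOn φ (A : Set V)) {e e' : Finset V}
    (he : e ⊆ A) (he' : e' ⊆ A) (h : e.image φ = e'.image φ) : e = e' := by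
  ext a
  constructor
  · intro ha
    have : φ a ∈ e'.image φ := h ▸ Finset.mem_image_of_mem _ ha
    obtain ⟨a', ha', haa⟩ := Finset.mem_image.1 this
    rwa [← hinj (he' ha') (he ha) haa]
  · intro ha
    have : φ a ∈ e.image φ := h ▸ Finset.mem_image_of_mem _ ha
    obtain ⟨a', ha', haa⟩ := Finset.mem_image.1 this
    rwa [← hinj (he ha') (he' ha) haa]

section Transport

variable (h1 : ∀ i, w₂.1 i = φ (w₁.1 i)) (h2 : ∀ i, w₂.2 i = (w₁.2 i).image φ)

include h1 in
lemma visited_eq_image : visited w₂ = (visited w₁).image φ := by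
  rw [visited, visited, Finset.image_image]
  apply Finset.image_congr
  intro i _
  exact h1 i

include h2 in
lemma sup_eq_image : Finset.univ.sup w₂.2 = (Finset.univ.sup w₁.2).image φ := by
  ext x
  simp only [Finset.mem_sup, Finset.mem_image]
  constructor
  · rintro ⟨i, -, hx⟩
    rw [h2 i] at hx
    obtain ⟨a, ha, rfl⟩ := Finset.mem_image.1 hx
    exact ⟨a, ⟨i, Finset.mem_univ _, ha⟩, rfl⟩
  · rintro ⟨a, ⟨i, -, ha⟩, rfl⟩
    exact ⟨i, Finset.mem_univ _, by rw [h2 i]; exact Finset.mem_image_of_mem _ ha⟩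

include h1 h2 in
lemma vertSet_eq_image : vertSet w₂ = (vertSet w₁).image φ := by
  rw [vertSet, vertSet, Finset.image_union, visited_eq_image h1, sup_eq_image h2]

include h2 in
lemma edgeSet_eq_image : edgeSet w₂ = (edgeSet w₁).image (Finset.image φ) := by
  rw [edgeSet, edgeSet, Finset.image_image]
  apply Finset.image_congr
  intro i _
  exact h2 i

end Transport

lemma walkEquiv_refl (w : WalkData V k) : WalkEquiv w w :=
  ⟨id, Set.injOn_id _, fun i => rfl, fun i => Finset.image_id.symm⟩

lemma walkEquiv_symm (h : WalkEquiv w₁ w₂) : WalkEquiv w₂ w₁ := by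
  classical
  obtain ⟨φ, hinj, h1, h2⟩ := h
  set ψ : V → V := fun y => if h : ∃ x ∈ vertSet w₁, φ x = y then Classical.choose h else y
    with hψ
  have hψφ : ∀ x ∈ vertSet w₁, ψ (φ x) = x := by
    intro x hx
    have hex : ∃ x' ∈ vertSet w₁, φ x' = φ x := ⟨x, hx, rfl⟩
    rw [hψ]
    simp only [hex, dif_pos]
    obtain ⟨hx', hfx⟩ := Classical.choose_spec hex
    exact hinj hx' hx hfx
  have hV2 : vertSet w₂ = (vertSet w₁).image φ := vertSet_eq_image h1 h2
  refine ⟨ψ, ?_, ?_, ?_⟩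
  · intro a ha b hb hab
    rw [hV2] at ha hb
    simp only [Finset.coe_image, Set.mem_image] at ha hb
    obtain ⟨a', ha', rfl⟩ := ha
    obtain ⟨b', hb', rfl⟩ := hb
    rw [hψφ a' ha', hψφ b' hb'] at hab
    rw [hab]
  · intro i
    rw [h1 i]
    exact (hψφ _ (visited_subset_vertSet' w₁
      (Finset.mem_image_of_mem _ (Finset.mem_univ i)))).symm
  · intro i
    rw [h2 i, Finset.image_image]
    refine ((Finset.image_congr ?_).trans Finset.image_id).symm
    intro a ha
    exact hψφ a (edge_subset_vertSet' w₁ i ha)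

lemma walkEquiv_trans {w₃ : WalkData V k} (h : WalkEquiv w₁ w₂) (h' : WalkEquiv w₂ w₃) :
    WalkEquiv w₁ w₃ := by
  obtain ⟨φ, hinj, h1, h2⟩ := h
  obtain ⟨φ', hinj', h1', h2'⟩ := h'
  have hV2 : vertSet w₂ = (vertSet w₁).image φ := vertSet_eq_image h1 h2
  refine ⟨φ' ∘ φ, ?_, ?_, ?_⟩
  · intro a ha b hb hab
    have ha' : φ a ∈ vertSet w₂ := hV2 ▸ Finset.mem_image_of_mem _ ha
    have hb' : φ b ∈ vertSet w₂ := hV2 ▸ Finset.mem_image_of_mem _ hb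
    exact hinj ha hb (hinj' ha' hb' hab)
  · intro i
    rw [h1' i, h1 i]
    rfl
  · intro i
    rw [h2' i, h2 i, Finset.image_image]

end EquivBasic
section EquivInvariance

variable {q l : ℕ} {w₁ w₂ : WalkData ℕ l} {φ : ℕ → ℕ}

lemma edgeSet_subset_vertSet' {w : WalkData ℕ l} {e : Finset ℕ} (he : e ∈ edgeSet w) :
    e ⊆ vertSet w := by
  obtain ⟨i, rfl⟩ := mem_edgeSet_iff.1 he
  exact edge_subset_vertSet' w i

section Inv

variable (hinj : Set.InjOn φ ((vertSet w₁ : Finset ℕ) : Set ℕ))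
  (h1 : ∀ i, w₂.1 i = φ (w₁.1 i)) (h2 : ∀ i, w₂.2 i = (w₁.2 i).image φ)

include hinj h1 h2

lemma isClosedWalk_invariant (hw : IsClosedWalk q l w₁) : IsClosedWalk q l w₂ := by
  refine ⟨?_, ?_, ?_⟩
  · rw [h1, h1, hw.1]
  · intro i
    rw [h2 i]
    rw [Finset.card_image_of_injOn (hinj.mono ?_)]
    · exact hw.2.1 i
    · exact_mod_cast edge_subset_vertSet' w₁ i
  · intro i
    rw [h1, h1, h2]
    exact ⟨Finset.mem_image_of_mem _ (hw.2.2 i).1, Finset.mem_image_of_mem _ (hw.2.2 i).2⟩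

lemma isEssential_invariant (hw : IsEssential q w₁) : IsEssential q w₂ := by
  have hV2 : vertSet w₂ = (vertSet w₁).image φ := vertSet_eq_image h1 h2
  have hE2 : edgeSet w₂ = (edgeSet w₁).image (Finset.image φ) := edgeSet_eq_image h2
  refine ⟨isClosedWalk_invariant hinj h1 h2 hw.1, ?_, ?_⟩
  · intro x hx y hy hxy
    rw [hV2] at hx hy
    obtain ⟨a, ha, rfl⟩ := Finset.mem_image.1 hx
    obtain ⟨b, hb, rfl⟩ := Finset.mem_image.1 hy
    have hab : a ≠ b := fun h => hxy (by rw [h])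
    have := hw.2.1 a ha b hb hab
    rw [hE2]
    exact conn_map φ this
  · rw [hV2, hE2, Finset.card_image_of_injOn hinj, Finset.card_image_of_injOn ?_]
    · exact hw.2.2
    · intro e he e' he' hee
      exact image_inj_aux hinj (edgeSet_subset_vertSet' (Finset.mem_coe.1 he))
        (edgeSet_subset_vertSet' (Finset.mem_coe.1 he')) hee

lemma rootSteps_invariant : rootSteps w₂ = rootSteps w₁ := by
  rw [rootSteps, rootSteps]
  congr 1
  ext t
  simp only [Finset.mem_filter, Finset.mem_univ, true_and, h1]
  constructor
  · intro h
    exact hinj (visited_subset_vertSet' w₁ (vert_mem_visited _))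
      (visited_subset_vertSet' w₁ (vert_mem_visited _)) h
  · intro h
    rw [h]

lemma firstEdge_image (hl : 0 < l) : firstEdge w₂ = (firstEdge w₁).image φ := by
  rw [firstEdge_eq hl, firstEdge_eq hl, h2]

lemma firstEdge_subset_vertSet (hl : 0 < l) : firstEdge w₁ ⊆ vertSet w₁ :=
  edgeSet_subset_vertSet' (firstEdge_mem_edgeSet hl)

omit hinj h2 in
include h1 in
lemma firstTime_image' {x : ℕ} (hx : x ∈ visited w₁)
    (hinj : Set.InjOn φ ((vertSet w₁ : Finset ℕ) : Set ℕ)) :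
    firstTime w₂ (φ x) = firstTime w₁ x := by
  rw [firstTime, firstTime]
  congr 1
  ext j
  constructor
  · rintro ⟨h, hj⟩
    rw [h1] at hj
    exact ⟨h, hinj (visited_subset_vertSet' w₁ (vert_mem_visited _))
      (visited_subset_vertSet' w₁ hx) hj⟩
  · rintro ⟨h, hj⟩
    exact ⟨h, by rw [h1, hj]⟩

lemma interT_image (hl : 0 < l) :
    firstEdge w₂ ∩ visited w₂ = (firstEdge w₁ ∩ visited w₁).image φ := by
  rw [firstEdge_image hinj h1 h2 hl, visited_eq_image h1,
    ← Finset.image_inter_of_injOn _ _ (hinj.mono ?_)]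
  intro x hx
  rcases hx with hx | hx
  · exact firstEdge_subset_vertSet hinj h1 h2 hl (Finset.mem_coe.1 hx)
  · exact visited_subset_vertSet' w₁ (Finset.mem_coe.1 hx)

lemma kappa_invariant (hl : 0 < l) : kappa w₂ = kappa w₁ := by
  rw [kappa, kappa, interT_image hinj h1 h2 hl]
  apply Finset.card_image_of_injOn
  apply hinj.mono
  intro x hx
  rw [Finset.mem_coe, Finset.mem_inter] at hx
  exact visited_subset_vertSet' w₁ hx.2

lemma LL_invariant (hl : 0 < l) : LL w₂ = LL w₁ := by
  rw [LL, LL]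
  congr 1
  rw [interT_image hinj h1 h2 hl, Finset.image_image]
  apply Finset.image_congr
  intro x hx
  rw [Finset.mem_coe, Finset.mem_inter] at hx
  exact firstTime_image' h1 hx.2 hinj

lemma eVert_image (hl : 0 < l) {i : ℕ} (hi1 : 1 ≤ i) (hik : i ≤ kappa w₁) :
    eVert w₂ i = φ (eVert w₁ i) := by
  have hspec := eVert_spec (w := w₁) hi1 hik
  set n := (LL w₁).getD (i - 1) 0 with hn
  have hnl : n < l + 1 := by
    rw [hspec.2]
    exact firstTime_lt (eVert_mem_visited hi1 hik)
  have h3 : eVert w₂ i = vertAt w₂ n := by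
    rw [eVert_def', LL_invariant hinj h1 h2 hl]
  have h4 : eVert w₁ i = vertAt w₁ n := eVert_def' i
  rw [h3, h4, vertAt, vertAt, dif_pos hnl, dif_pos hnl, h1]

end Inv

end EquivInvariance
section EquivInvariance2

variable {q l : ℕ} {w₁ w₂ : WalkData ℕ l} {φ : ℕ → ℕ}

section Inv2

variable (hinj : Set.InjOn φ ((vertSet w₁ : Finset ℕ) : Set ℕ))
  (h1 : ∀ i, w₂.1 i = φ (w₁.1 i)) (h2 : ∀ i, w₂.2 i = (w₁.2 i).image φ)

include hinj h1 h2

lemma edge_eq_iff (hl : 0 < l) (t : Fin l) :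
    w₂.2 t = firstEdge w₂ ↔ w₁.2 t = firstEdge w₁ := by
  rw [h2 t, firstEdge_image hinj h1 h2 hl]
  constructor
  · intro h
    exact image_inj_aux hinj (edge_subset_vertSet' w₁ t)
      (firstEdge_subset_vertSet hinj h1 h2 hl) h
  · intro h
    rw [h]

lemma depart_eq_eVert_iff (hl : 0 < l) {i : ℕ} (hi1 : 1 ≤ i) (hik : i ≤ kappa w₁)
    (t : Fin l) : w₂.1 t.castSucc = eVert w₂ i ↔ w₁.1 t.castSucc = eVert w₁ i := by
  rw [h1, eVert_image hinj h1 h2 hl hi1 hik]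
  constructor
  · intro h
    exact hinj (visited_subset_vertSet' w₁ (vert_mem_visited _))
      (visited_subset_vertSet' w₁ (eVert_mem_visited hi1 hik)) h
  · intro h
    rw [h]

lemma fSteps_invariant (hl : 0 < l) {i : ℕ} (hi1 : 1 ≤ i) (hik : i ≤ kappa w₁) :
    fSteps w₂ i = fSteps w₁ i := by
  rw [fSteps, fSteps]
  congr 1
  ext t
  simp only [Finset.mem_filter, Finset.mem_univ, true_and]
  rw [edge_eq_iff hinj h1 h2 hl t, depart_eq_eVert_iff hinj h1 h2 hl hi1 hik t]

lemma erase_image (hl : 0 < l) :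
    (edgeSet w₂).erase (firstEdge w₂) =
      ((edgeSet w₁).erase (firstEdge w₁)).image (Finset.image φ) := by
  have hE2 : edgeSet w₂ = (edgeSet w₁).image (Finset.image φ) := edgeSet_eq_image h2
  have hf2 : firstEdge w₂ = (firstEdge w₁).image φ := firstEdge_image hinj h1 h2 hl
  ext e
  rw [Finset.mem_erase, hE2, hf2]
  constructor
  · rintro ⟨hne, he⟩
    obtain ⟨d, hd, rfl⟩ := Finset.mem_image.1 he
    refine Finset.mem_image.2 ⟨d, Finset.mem_erase.2 ⟨?_, hd⟩, rfl⟩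
    rintro rfl
    exact hne rfl
  · intro he
    obtain ⟨d, hd, rfl⟩ := Finset.mem_image.1 he
    rw [Finset.mem_erase] at hd
    refine ⟨?_, Finset.mem_image_of_mem _ hd.2⟩
    intro hdf
    exact hd.1 (image_inj_aux hinj (edgeSet_subset_vertSet' hd.2)
      (firstEdge_subset_vertSet hinj h1 h2 hl) hdf)

lemma inComp_invariant (hl : 0 < l) {i : ℕ} (hi1 : 1 ≤ i) (hik : i ≤ kappa w₁)
    (t : Fin l) : inComp w₂ i t ↔ inComp w₁ i t := by
  have hEr : (edgeSet w₂).erase (firstEdge w₂) =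
      ((edgeSet w₁).erase (firstEdge w₁)).image (Finset.image φ) :=
    erase_image hinj h1 h2 hl
  have hA : ∀ e ∈ (edgeSet w₁).erase (firstEdge w₁), e ⊆ vertSet w₁ :=
    fun e he => edgeSet_subset_vertSet' (Finset.mem_of_mem_erase he)
  have hev : eVert w₂ i = φ (eVert w₁ i) := eVert_image hinj h1 h2 hl hi1 hik
  constructor
  · rintro ⟨hne₂, x₂, hx₂, hc₂⟩
    have hne₁ : w₁.2 t ≠ firstEdge w₁ := by
      intro h
      exact hne₂ ((edge_eq_iff hinj h1 h2 hl t).2 h)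
    rw [h2 t] at hx₂
    obtain ⟨a, ha, rfl⟩ := Finset.mem_image.1 hx₂
    rw [hEr, hev] at hc₂
    refine ⟨hne₁, a, ha, ?_⟩
    exact conn_of_map φ hA hinj (edge_subset_vertSet' w₁ t ha)
      (visited_subset_vertSet' w₁ (eVert_mem_visited hi1 hik)) hc₂
  · rintro ⟨hne₁, x, hx, hc⟩
    refine ⟨fun h => hne₁ ((edge_eq_iff hinj h1 h2 hl t).1 h), φ x, ?_, ?_⟩
    · rw [h2 t]
      exact Finset.mem_image_of_mem _ hx
    · rw [hEr, hev]
      exact conn_map φ hc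

lemma uSteps_invariant (hl : 0 < l) {i : ℕ} (hi1 : 1 ≤ i) (hik : i ≤ kappa w₁) :
    uSteps w₂ i = uSteps w₁ i := by
  rw [uSteps, uSteps]
  congr 1
  ext t
  simp only [Finset.mem_filter, Finset.mem_univ, true_and]
  rw [inComp_invariant hinj h1 h2 hl hi1 hik t]

lemma vSteps_invariant (hl : 0 < l) {i : ℕ} (hi1 : 1 ≤ i) (hik : i ≤ kappa w₁) :
    vSteps w₂ i = vSteps w₁ i := by
  rw [vSteps, vSteps]
  congr 1
  ext t
  simp only [Finset.mem_filter, Finset.mem_univ, true_and]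
  rw [inComp_invariant hinj h1 h2 hl hi1 hik t,
    depart_eq_eVert_iff hinj h1 h2 hl hi1 hik t]

end Inv2

/-- Packaged invariance of all walk data under equivalence. -/
lemma data_invariant (hl : 0 < l) (heq : WalkEquiv w₁ w₂) :
    (IsEssential q w₁ → IsEssential q w₂) ∧ rootSteps w₂ = rootSteps w₁ ∧
      kappa w₂ = kappa w₁ ∧
      ∀ i : ℕ, 1 ≤ i → i ≤ kappa w₁ →
        fSteps w₂ i = fSteps w₁ i ∧ uSteps w₂ i = uSteps w₁ i ∧
          vSteps w₂ i = vSteps w₁ i := by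
  obtain ⟨φ, hinj, h1, h2⟩ := heq
  exact ⟨fun hw => isEssential_invariant hinj h1 h2 hw, rootSteps_invariant hinj h1 h2,
    kappa_invariant hinj h1 h2 hl,
    fun i hi1 hik => ⟨fSteps_invariant hinj h1 h2 hl hi1 hik,
      uSteps_invariant hinj h1 h2 hl hi1 hik, vSteps_invariant hinj h1 h2 hl hi1 hik⟩⟩

end EquivInvariance2
section RepSystem

variable {q l r : ℕ}

/-- Walk equivalence as a setoid. -/
def wsetoid (l : ℕ) : Setoid (WalkData ℕ l) :=
  ⟨WalkEquiv, ⟨walkEquiv_refl, walkEquiv_symm, walkEquiv_trans⟩⟩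

/-- The box of walks with all labels below `N`. -/
def walkBox (l N : ℕ) : Finset (WalkData ℕ l) :=
  (Fintype.piFinset fun _ : Fin (l + 1) => Finset.range N) ×ˢ
    (Fintype.piFinset fun _ : Fin l => (Finset.range N).powerset)

lemma mem_walkBox {N : ℕ} {w : WalkData ℕ l} :
    w ∈ walkBox l N ↔ (∀ i, w.1 i < N) ∧ ∀ i, w.2 i ⊆ Finset.range N := by
  simp [walkBox, Finset.mem_product, Fintype.mem_piFinset, Finset.mem_powerset,
    Finset.mem_range]

lemma vertSet_card_le (hw : IsClosedWalk q l w) (w : WalkData ℕ l) :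
    True := trivial

lemma card_vertSet_le {w : WalkData ℕ l} (hw : IsClosedWalk q l w) :
    (vertSet w).card ≤ q * l + l + 1 := by
  have h1 : (visited w).card ≤ l + 1 := by
    calc (visited w).card ≤ (Finset.univ : Finset (Fin (l + 1))).card :=
          Finset.card_image_le
      _ = l + 1 := by simp
  have h2 : (Finset.univ.sup w.2).card ≤ q * l := by
    rw [Finset.sup_eq_biUnion]
    calc (Finset.univ.biUnion w.2).card ≤ ∑ i : Fin l, (w.2 i).card :=
          Finset.card_biUnion_le
      _ = ∑ _i : Fin l, q := by
          exact Finset.sum_congr rfl fun i _ => hw.2.1 i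
      _ = q * l := by simp [Nat.mul_comm]
  calc (vertSet w).card ≤ (Finset.univ.sup w.2).card + (visited w).card :=
        Finset.card_union_le _ _
    _ ≤ q * l + (l + 1) := Nat.add_le_add h2 h1
    _ = q * l + l + 1 := by omega

/-- Every essential walk is equivalent to one in the box. -/
lemma exists_box_equiv {w' : WalkData ℕ l} (hw : IsClosedWalk q l w') :
    ∃ w ∈ walkBox l (q * l + l + 1), WalkEquiv w' w := by
  classical
  set A := vertSet w' with hA
  set N := q * l + l + 1 with hN
  have hcard : A.card ≤ N := card_vertSet_le hw
  set φ : ℕ → ℕ := fun x => if hx : x ∈ A then ((A.equivFin ⟨x, hx⟩ : Fin A.card) : ℕ) else 0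
    with hφ
  have hφlt : ∀ x ∈ A, φ x < N := by
    intro x hx
    rw [hφ]
    simp only [hx, dif_pos]
    exact lt_of_lt_of_le (A.equivFin ⟨x, hx⟩).isLt hcard
  have hφinj : Set.InjOn φ (A : Set ℕ) := by
    intro a ha b hb hab
    rw [Finset.mem_coe] at ha hb
    rw [hφ] at hab
    simp only [ha, hb, dif_pos] at hab
    have h3 : A.equivFin ⟨a, ha⟩ = A.equivFin ⟨b, hb⟩ := Fin.ext hab
    have h4 := A.equivFin.injective h3
    exact congrArg Subtype.val h4
  refine ⟨(fun i => φ (w'.1 i), fun i => (w'.2 i).image φ), ?_, φ, hφinj, fun i => rfl,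
    fun i => rfl⟩
  rw [mem_walkBox]
  constructor
  · intro i
    exact hφlt _ (visited_subset_vertSet' w' (vert_mem_visited i))
  · intro i
    intro x hx
    obtain ⟨a, ha, rfl⟩ := Finset.mem_image.1 hx
    exact Finset.mem_range.2 (hφlt _ (edge_subset_vertSet' w' i ha))

/-- The canonical representative system. -/
def repSys (q l r : ℕ) : Finset (WalkData ℕ l) :=
  ((walkBox l (q * l + l + 1)).filter
    (fun w => IsEssential q w ∧ rootSteps w = r)).image
    (fun w => Quotient.out (Quotient.mk (wsetoid l) w))

lemma out_equiv (w : WalkData ℕ l) :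
    WalkEquiv (Quotient.out (Quotient.mk (wsetoid l) w)) w :=
  Quotient.exact (Quotient.out_eq (Quotient.mk (wsetoid l) w))

lemma repSys_isRepSystem : IsRepSystem q l r (repSys q l r) := by
  constructor
  · intro w hw
    obtain ⟨w₀, hw₀, rfl⟩ := Finset.mem_image.1 hw
    obtain ⟨-, hess, hroot⟩ := Finset.mem_filter.1 hw₀
    have heq : WalkEquiv w₀ (Quotient.out (Quotient.mk (wsetoid l) w₀)) :=
      walkEquiv_symm (out_equiv w₀)
    obtain ⟨φ, hinj, h1, h2⟩ := heq
    exact ⟨isEssential_invariant hinj h1 h2 hess,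
      (rootSteps_invariant hinj h1 h2).trans hroot⟩
  · intro w' hess' hroot'
    obtain ⟨w₀, hbox, heq'⟩ := exists_box_equiv hess'.1
    have hw₀ess : IsEssential q w₀ := by
      obtain ⟨φ, hinj, h1, h2⟩ := heq'
      exact isEssential_invariant hinj h1 h2 hess'
    have hw₀root : rootSteps w₀ = r := by
      obtain ⟨φ, hinj, h1, h2⟩ := heq'
      exact (rootSteps_invariant hinj h1 h2).trans hroot'
    have hw₀W : w₀ ∈ (walkBox l (q * l + l + 1)).filter
        (fun w => IsEssential q w ∧ rootSteps w = r) :=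
      Finset.mem_filter.2 ⟨hbox, hw₀ess, hw₀root⟩
    refine ⟨Quotient.out (Quotient.mk (wsetoid l) w₀),
      ⟨Finset.mem_image_of_mem _ hw₀W,
        walkEquiv_trans (out_equiv w₀) (walkEquiv_symm heq')⟩, ?_⟩
    rintro y ⟨hyR, hy⟩
    obtain ⟨a, ha, rfl⟩ := Finset.mem_image.1 hyR
    have h5 : WalkEquiv a w₀ :=
      walkEquiv_trans (walkEquiv_trans (walkEquiv_symm (out_equiv a)) hy) heq'
    have h6 : Quotient.mk (wsetoid l) a = Quotient.mk (wsetoid l) w₀ := Quotient.sound h5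
    rw [h6]
  
end RepSystem
section RepSystem2

variable {q l r : ℕ}

/-- The data constraints of `Λ₂`. -/
def P2 (κ : ℕ) (f u v : Fin κ → ℕ) {l : ℕ} (w : WalkData ℕ l) : Prop :=
  kappa w = κ ∧ ∀ i : Fin κ, fSteps w ((i : ℕ) + 1) = f i ∧
    uSteps w ((i : ℕ) + 1) = u i ∧ vSteps w ((i : ℕ) + 1) = v i

lemma isRepSystem₂_filter (hl : 0 < l) {R : Finset (WalkData ℕ l)}
    (hR : IsRepSystem q l r R) (κ : ℕ) (f u v : Fin κ → ℕ) :
    IsRepSystem₂ q l r κ f u v (R.filter (P2 κ f u v)) := by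
  constructor
  · intro w hw
    rw [Finset.mem_filter] at hw
    obtain ⟨hess, hroot⟩ := hR.1 w hw.1
    exact ⟨hess, hroot, hw.2.1, hw.2.2⟩
  · intro w' hess' hroot' hκ' hdata'
    obtain ⟨w, ⟨hwR, hwe⟩, huniq⟩ := hR.2 w' hess' hroot'
    have hdi := data_invariant (q := q) hl hwe
    have hκw : kappa w = κ := by rw [← hκ', hdi.2.2.1]
    have hP : P2 κ f u v w := by
      refine ⟨hκw, fun i => ?_⟩
      have hb : (i : ℕ) + 1 ≤ kappa w := by
        have := i.isLt
        omega
      obtain ⟨hf, hu, hv⟩ := hdi.2.2.2 ((i : ℕ) + 1) (by omega) hb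
      obtain ⟨hf', hu', hv'⟩ := hdata' i
      rw [hf, hu, hv] at *
      exact ⟨hf', hu', hv'⟩
    refine ⟨w, ⟨Finset.mem_filter.2 ⟨hwR, hP⟩, hwe⟩, ?_⟩
    rintro y ⟨hyF, hye⟩
    exact huniq y ⟨(Finset.mem_filter.1 hyF).1, hye⟩

lemma key_sum (hq : 2 ≤ q) (hl : 1 ≤ l) {w : WalkData ℕ l} (hw : IsEssential q w)
    (hroot : rootSteps w = r) (c : ℝ) :
    (∑ κ ∈ Finset.Icc 1 q,
      ∑ f ∈ (Fintype.piFinset fun _ : Fin κ => Finset.Icc 1 l).filter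
          (fun f => (∑ i, f i) ≤ l ∧ firstCoord f ≤ r),
        ∑ u ∈ (Fintype.piFinset fun _ : Fin κ => Finset.range (l + 1)).filter
            (fun u => (∑ i, u i) = l - (∑ i, f i)),
          ∑ v ∈ (Fintype.piFinset fun _ : Fin κ => Finset.range (l + 1)).filter
              (fun v => (∀ i, v i ≤ u i) ∧ firstCoord v = r - firstCoord f),
            (if P2 κ f u v w then c else 0)) = c := by
  classical
  have hl0 : 0 < l := hl
  set κ₀ := kappa w with hκ₀
  have hκ1 : 1 ≤ κ₀ := kappa_pos hw.1 hl0
  have hκq : κ₀ ≤ q := kappa_le hw.1 hl0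
  set f₀ : Fin κ₀ → ℕ := fun i => fSteps w ((i : ℕ) + 1) with hf₀
  set u₀ : Fin κ₀ → ℕ := fun i => uSteps w ((i : ℕ) + 1) with hu₀
  set v₀ : Fin κ₀ → ℕ := fun i => vSteps w ((i : ℕ) + 1) with hv₀
  have hFc : (Finset.univ.filter fun t : Fin l => w.2 t = firstEdge w).card +
      (Finset.univ.filter fun t : Fin l => w.2 t ≠ firstEdge w).card = l := steps_split
  have hsumf : ∑ i, f₀ i = (Finset.univ.filter fun t : Fin l => w.2 t = firstEdge w).card :=
    sum_fSteps hw.1 hl0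
  have hsumu : ∑ i, u₀ i = (Finset.univ.filter fun t : Fin l => w.2 t ≠ firstEdge w).card :=
    sum_uSteps hw hq hl0
  have hroot2 : rootSteps w = fSteps w 1 + vSteps w 1 := root_split hw hl0
  have hfc : firstCoord f₀ = fSteps w 1 := by
    rw [firstCoord, dif_pos (show 0 < κ₀ by omega)]
  have hvc : firstCoord v₀ = vSteps w 1 := by
    rw [firstCoord, dif_pos (show 0 < κ₀ by omega)]
  have hf₀mem : f₀ ∈ (Fintype.piFinset fun _ : Fin κ₀ => Finset.Icc 1 l).filter
      (fun f => (∑ i, f i) ≤ l ∧ firstCoord f ≤ r) := by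
    refine Finset.mem_filter.2 ⟨Fintype.mem_piFinset.2 fun i => ?_, ?_, ?_⟩
    · refine Finset.mem_Icc.2 ⟨?_, fSteps_le _⟩
      exact fSteps_pos hw hq hl0 (by omega) (by have := i.isLt; omega)
    · rw [hsumf]
      calc (Finset.univ.filter fun t : Fin l => w.2 t = firstEdge w).card
          ≤ (Finset.univ : Finset (Fin l)).card := Finset.card_filter_le _ _
        _ = l := by simp
    · rw [hfc, ← hroot]
      omega
  have hu₀mem : u₀ ∈ (Fintype.piFinset fun _ : Fin κ₀ => Finset.range (l + 1)).filter
      (fun u => (∑ i, u i) = l - (∑ i, f₀ i)) := by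
    refine Finset.mem_filter.2 ⟨Fintype.mem_piFinset.2 fun i => ?_, ?_⟩
    · exact Finset.mem_range.2 (Nat.lt_succ_of_le (uSteps_le ((i : ℕ) + 1)))
    · rw [hsumu, hsumf]
      omega
  have hv₀mem : v₀ ∈ (Fintype.piFinset fun _ : Fin κ₀ => Finset.range (l + 1)).filter
      (fun v => (∀ i, v i ≤ u₀ i) ∧ firstCoord v = r - firstCoord f₀) := by
    refine Finset.mem_filter.2 ⟨Fintype.mem_piFinset.2 fun i => ?_, fun i => ?_, ?_⟩
    · exact Finset.mem_range.2 (Nat.lt_succ_of_le (vSteps_le ((i : ℕ) + 1)))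
    · exact vSteps_le_uSteps _
    · rw [hvc, hfc, ← hroot]
      omega
  rw [Finset.sum_eq_single_of_mem κ₀ (Finset.mem_Icc.2 ⟨hκ1, hκq⟩) ?_]
  · rw [Finset.sum_eq_single_of_mem f₀ hf₀mem ?_]
    · rw [Finset.sum_eq_single_of_mem u₀ hu₀mem ?_]
      · rw [Finset.sum_eq_single_of_mem v₀ hv₀mem ?_]
        · exact if_pos ⟨rfl, fun i => ⟨rfl, rfl, rfl⟩⟩
        · intro v hv hvne
          refine if_neg fun hP => hvne ?_
          funext i
          exact (hP.2 i).2.2.symm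
      · intro u hu hune
        apply Finset.sum_eq_zero
        intro v hv
        refine if_neg fun hP => hune ?_
        funext i
        exact (hP.2 i).2.1.symm
    · intro f hf hfne
      apply Finset.sum_eq_zero
      intro u hu
      apply Finset.sum_eq_zero
      intro v hv
      refine if_neg fun hP => hfne ?_
      funext i
      exact (hP.2 i).1.symm
  · intro b hb hbne
    apply Finset.sum_eq_zero
    intro f hf
    apply Finset.sum_eq_zero
    intro u hu
    apply Finset.sum_eq_zero
    intro v hv
    exact if_neg fun hP => hbne (by rw [← hP.1, hκ₀])

end RepSystem2
/-- **First splitting lemma, part 1.** For `l ≥ 1` and `1 ≤ r ≤ l`,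
`S(l,r) = ∑_{κ=1}^q ∑_f ∑_u ∑_v S₂^{(κ)}(l,r,f,u,v)`, the sums running over `f ∈ ℤ^κ` with
`f_i ≥ 1`, `‖f‖₁ ≤ l`, `f₁ ≤ r`; over `u ∈ ℤ₊^κ` with `‖u‖₁ = l - ‖f‖₁`; and over
`v ∈ ℤ₊^κ` with `v ≤ u` and `v₁ = r - f₁`.  Here `S l r` is the sum of the contributions
`θ(w)` of the essential walks in `Λ(l,r)` (one per equivalence class), and
`S₂ l r κ f u v` the corresponding sum over `Λ₂^{(κ)}(l,r,f,u,v)`. -/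
theorem first_splitting_lemma_part1 (q : ℕ) (hq : 2 ≤ q) (p : ℝ) (hp : 0 < p)
    (X : ℕ → ℝ) (S : ℕ → ℕ → ℝ)
    (S₂ : (l r κ : ℕ) → (Fin κ → ℕ) → (Fin κ → ℕ) → (Fin κ → ℕ) → ℝ)
    (hS : ∀ l r R, IsRepSystem q l r R → S l r = ∑ w ∈ R, contrib p X w)
    (hS₂ : ∀ l r κ f u v R, IsRepSystem₂ q l r κ f u v R →
      S₂ l r κ f u v = ∑ w ∈ R, contrib p X w)
    (l r : ℕ) (hl : 1 ≤ l) (hr : 1 ≤ r) (hrl : r ≤ l) :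
    S l r = ∑ κ ∈ Finset.Icc 1 q,
      ∑ f ∈ (Fintype.piFinset fun _ : Fin κ => Finset.Icc 1 l).filter
          (fun f => (∑ i, f i) ≤ l ∧ firstCoord f ≤ r),
        ∑ u ∈ (Fintype.piFinset fun _ : Fin κ => Finset.range (l + 1)).filter
            (fun u => (∑ i, u i) = l - (∑ i, f i)),
          ∑ v ∈ (Fintype.piFinset fun _ : Fin κ => Finset.range (l + 1)).filter
              (fun v => (∀ i, v i ≤ u i) ∧ firstCoord v = r - firstCoord f),
            S₂ l r κ f u v := by
  classical
  have hl0 : 0 < l := hl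
  set R := repSys q l r with hRdef
  have hRrep : IsRepSystem q l r R := repSys_isRepSystem
  rw [hS l r R hRrep]
  have hS₂eq : ∀ (κ : ℕ) (f u v : Fin κ → ℕ),
      S₂ l r κ f u v = ∑ w ∈ R, (if P2 κ f u v w then contrib p X w else 0) := by
    intro κ f u v
    rw [hS₂ l r κ f u v _ (isRepSystem₂_filter hl0 hRrep κ f u v), Finset.sum_filter]
  calc ∑ w ∈ R, contrib p X w
      = ∑ w ∈ R, ∑ κ ∈ Finset.Icc 1 q,
          ∑ f ∈ (Fintype.piFinset fun _ : Fin κ => Finset.Icc 1 l).filter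
              (fun f => (∑ i, f i) ≤ l ∧ firstCoord f ≤ r),
            ∑ u ∈ (Fintype.piFinset fun _ : Fin κ => Finset.range (l + 1)).filter
                (fun u => (∑ i, u i) = l - (∑ i, f i)),
              ∑ v ∈ (Fintype.piFinset fun _ : Fin κ => Finset.range (l + 1)).filter
                  (fun v => (∀ i, v i ≤ u i) ∧ firstCoord v = r - firstCoord f),
                (if P2 κ f u v w then contrib p X w else 0) := by
        refine Finset.sum_congr rfl fun w hw => ?_
        exact (key_sum hq hl (hRrep.1 w hw).1 (hRrep.1 w hw).2 (contrib p X w)).symm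
    _ = ∑ κ ∈ Finset.Icc 1 q, ∑ w ∈ R,
          ∑ f ∈ (Fintype.piFinset fun _ : Fin κ => Finset.Icc 1 l).filter
              (fun f => (∑ i, f i) ≤ l ∧ firstCoord f ≤ r),
            ∑ u ∈ (Fintype.piFinset fun _ : Fin κ => Finset.range (l + 1)).filter
                (fun u => (∑ i, u i) = l - (∑ i, f i)),
              ∑ v ∈ (Fintype.piFinset fun _ : Fin κ => Finset.range (l + 1)).filter
                  (fun v => (∀ i, v i ≤ u i) ∧ firstCoord v = r - firstCoord f),
                (if P2 κ f u v w then contrib p X w else 0) := Finset.sum_comm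
    _ = ∑ κ ∈ Finset.Icc 1 q,
          ∑ f ∈ (Fintype.piFinset fun _ : Fin κ => Finset.Icc 1 l).filter
              (fun f => (∑ i, f i) ≤ l ∧ firstCoord f ≤ r),
          ∑ w ∈ R,
            ∑ u ∈ (Fintype.piFinset fun _ : Fin κ => Finset.range (l + 1)).filter
                (fun u => (∑ i, u i) = l - (∑ i, f i)),
              ∑ v ∈ (Fintype.piFinset fun _ : Fin κ => Finset.range (l + 1)).filter
                  (fun v => (∀ i, v i ≤ u i) ∧ firstCoord v = r - firstCoord f),
                (if P2 κ f u v w then contrib p X w else 0) :=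
        Finset.sum_congr rfl fun κ _ => Finset.sum_comm
    _ = ∑ κ ∈ Finset.Icc 1 q,
          ∑ f ∈ (Fintype.piFinset fun _ : Fin κ => Finset.Icc 1 l).filter
              (fun f => (∑ i, f i) ≤ l ∧ firstCoord f ≤ r),
            ∑ u ∈ (Fintype.piFinset fun _ : Fin κ => Finset.range (l + 1)).filter
                (fun u => (∑ i, u i) = l - (∑ i, f i)),
            ∑ w ∈ R,
              ∑ v ∈ (Fintype.piFinset fun _ : Fin κ => Finset.range (l + 1)).filter
                  (fun v => (∀ i, v i ≤ u i) ∧ firstCoord v = r - firstCoord f),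
                (if P2 κ f u v w then contrib p X w else 0) :=
        Finset.sum_congr rfl fun κ _ => Finset.sum_congr rfl fun f _ => Finset.sum_comm
    _ = ∑ κ ∈ Finset.Icc 1 q,
          ∑ f ∈ (Fintype.piFinset fun _ : Fin κ => Finset.Icc 1 l).filter
              (fun f => (∑ i, f i) ≤ l ∧ firstCoord f ≤ r),
            ∑ u ∈ (Fintype.piFinset fun _ : Fin κ => Finset.range (l + 1)).filter
                (fun u => (∑ i, u i) = l - (∑ i, f i)),
              ∑ v ∈ (Fintype.piFinset fun _ : Fin κ => Finset.range (l + 1)).filter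
                  (fun v => (∀ i, v i ≤ u i) ∧ firstCoord v = r - firstCoord f),
                ∑ w ∈ R, (if P2 κ f u v w then contrib p X w else 0) :=
        Finset.sum_congr rfl fun κ _ => Finset.sum_congr rfl fun f _ =>
          Finset.sum_congr rfl fun u _ => Finset.sum_comm
    _ = ∑ κ ∈ Finset.Icc 1 q,
          ∑ f ∈ (Fintype.piFinset fun _ : Fin κ => Finset.Icc 1 l).filter
              (fun f => (∑ i, f i) ≤ l ∧ firstCoord f ≤ r),
            ∑ u ∈ (Fintype.piFinset fun _ : Fin κ => Finset.range (l + 1)).filter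
                (fun u => (∑ i, u i) = l - (∑ i, f i)),
              ∑ v ∈ (Fintype.piFinset fun _ : Fin κ => Finset.range (l + 1)).filter
                  (fun v => (∀ i, v i ≤ u i) ∧ firstCoord v = r - firstCoord f),
                S₂ l r κ f u v :=
        Finset.sum_congr rfl fun κ _ => Finset.sum_congr rfl fun f _ =>
          Finset.sum_congr rfl fun u _ => Finset.sum_congr rfl fun v _ =>
            (hS₂eq κ f u v).symm

end
end

section
/- For κ ∈ [q], j ∈ [κ] and f ∈ ℤ_+^q with f_b = 0 for b > κ, let K^{(κ,q)}_{j;f} be the number of minimal walks within a single q-hyperedge with vertex set [q] that start at vertex 1, end at vertex j, visit exactly the vertices of [κ] with each new vertex being the smallest unused one (so the visited vertices in order of first appearance are 1, 2, …, κ), and make exactly f_a steps departing from vertex a for each a. Then these numbers satisfy the recurrence K^{(κ,q)}_{j;f} = Σ_{a ∈ [κ], a ≠ j, f − 1_a ∈ ℤ_+^q} K^{(κ,q)}_{a; f−1_a} + δ_{κ,j} · Σ_{a ∈ [κ−1], f − 1_a ∈ ℤ_+^q} K^{(κ−1,q)}_{a; f−1_a}, with initial conditions K^{(1,q)}_{j;f}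 = δ_{j,1} · ∏_{l=1}^{q} δ_{f_l,0}. -/
open Finset
open scoped Classical

/-- `Kwalk q κ j f` is the number of minimal walks within a single `q`-hyperedge with vertex
set `[q] = {1, …, q}` that start at vertex `1`, end at vertex `j`, visit exactly the vertices
of `[κ]` with each new vertex being the smallest unused one (so the visited vertices in
order of first appearance are `1, 2, …, κ`), and make exactly `f a` steps departing from
vertex `a` for each `a`.  A walk of `s` steps is a sequence `x : Fin (s+1) → ℕ` of vertices
with consecutive vertices distinct; "each new vertex is the smallest unused one" is the
restricted-growth condition `x t ≤ (max over earlier values) + 1`. -/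
noncomputable def Kwalk (q κ j : ℕ) (f : ℕ → ℕ) : ℕ :=
  Set.ncard {x : Fin ((∑ a ∈ Finset.Icc 1 q, f a) + 1) → ℕ |
    x 0 = 1 ∧ x (Fin.last _) = j ∧
    (∀ t, x t ∈ Finset.Icc 1 κ) ∧
    (∀ v ∈ Finset.Icc 1 κ, ∃ t, x t = v) ∧
    (∀ t : Fin (∑ a ∈ Finset.Icc 1 q, f a), x t.castSucc ≠ x t.succ) ∧
    (∀ t : Fin ((∑ a ∈ Finset.Icc 1 q, f a) + 1), t ≠ 0 → ∃ t' < t, x t ≤ x t' + 1) ∧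
    ∀ a : ℕ,
      (Finset.univ.filter fun t : Fin (∑ a ∈ Finset.Icc 1 q, f a) =>
        x t.castSucc = a).card = f a}

def Wset (κ j : ℕ) (f : ℕ → ℕ) (m : ℕ) : Set (Fin (m+1) → ℕ) :=
  {x | x 0 = 1 ∧ x (Fin.last m) = j ∧
    (∀ t, x t ∈ Finset.Icc 1 κ) ∧
    (∀ v ∈ Finset.Icc 1 κ, ∃ t, x t = v) ∧
    (∀ t : Fin m, x t.castSucc ≠ x t.succ) ∧
    (∀ t : Fin (m+1), t ≠ 0 → ∃ t' < t, x t ≤ x t' + 1) ∧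
    ∀ a : ℕ, (Finset.univ.filter fun t : Fin m => x t.castSucc = a).card = f a}

lemma Kwalk_eq_Wset (q κ j : ℕ) (f : ℕ → ℕ) :
    Kwalk q κ j f = (Wset κ j f (∑ a ∈ Finset.Icc 1 q, f a)).ncard := rfl

lemma Wset_finite (κ j : ℕ) (f : ℕ → ℕ) (m : ℕ) : (Wset κ j f m).Finite := by
  apply Set.Finite.subset (Set.Finite.pi fun _ : Fin (m+1) => Set.finite_Icc 1 κ)
  intro x hx
  simp only [Set.mem_pi, Set.mem_univ, forall_true_left]
  intro t
  have := hx.2.2.1 t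
  simpa [Set.mem_Icc] using this

lemma rgs_exists {m : ℕ} {x : Fin (m+1) → ℕ} (h0 : x 0 = 1)
    (hg : ∀ t : Fin (m+1), t ≠ 0 → ∃ t' < t, x t ≤ x t' + 1) :
    ∀ n : ℕ, ∀ s : Fin (m+1), s.val ≤ n → ∀ w, 1 ≤ w → w < x s → ∃ s' < s, x s' = w := by
  intro n
  induction n with
  | zero =>
    intro s hs w hw hws
    have : s = 0 := by rw [Fin.ext_iff, Fin.val_zero]; omega
    rw [this, h0] at hws; omega
  | succ n ih =>
    intro s hs w hw hws
    have hs0 : s ≠ 0 := by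
      rintro rfl; rw [h0] at hws; omega
    obtain ⟨t', ht', hle⟩ := hg s hs0
    by_cases h : x t' = w
    · exact ⟨t', ht', h⟩
    · have hw' : w < x t' := by omega
      have hvn : t'.val ≤ n := by
        have := (Fin.lt_def.mp ht'); omega
      obtain ⟨s', hs', hx⟩ := ih t' hvn w hw hw'
      exact ⟨s', hs'.trans ht', hx⟩

lemma count_split {m : ℕ} (x : Fin (m+2) → ℕ) (b : ℕ) :
    (Finset.univ.filter fun t : Fin (m+1) => x t.castSucc = b).card
      = (Finset.univ.filter fun t : Fin m => x t.castSucc.castSucc = b).card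
        + (if x ((Fin.last m).castSucc) = b then 1 else 0) := by
  rw [Finset.card_filter, Finset.card_filter, Fin.sum_univ_castSucc]

lemma ncard_biUnion' {α ι : Type*} (s : Finset ι) (t : ι → Set α)
    (hfin : ∀ i ∈ s, (t i).Finite)
    (hdisj : ∀ i ∈ s, ∀ j ∈ s, i ≠ j → Disjoint (t i) (t j)) :
    (⋃ i ∈ s, t i).ncard = ∑ i ∈ s, (t i).ncard := by
  classical
  induction s using Finset.induction with
  | empty => simp
  | @insert a s hni ih =>
    have hI : (⋃ i ∈ s, t i).Finite :=
      Set.Finite.biUnion s.finite_toSet (fun i hi => hfin i (Finset.mem_insert_of_mem hi))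
    have hd : Disjoint (t a) (⋃ i ∈ s, t i) := by
      simp only [Set.disjoint_iUnion_right]
      intro i hi
      exact hdisj a (Finset.mem_insert_self a s) i (Finset.mem_insert_of_mem hi)
        (by rintro rfl; exact hni hi)
    rw [Finset.sum_insert hni, Finset.set_biUnion_insert,
      Set.ncard_union_eq hd (hfin a (Finset.mem_insert_self a s)) hI,
      ih (fun i hi => hfin i (Finset.mem_insert_of_mem hi))
        (fun i hi j hj hij => hdisj i (Finset.mem_insert_of_mem hi) j
          (Finset.mem_insert_of_mem hj) hij)]

lemma snoc_mem {M κ κ' j a : ℕ} {f : ℕ → ℕ} {y : Fin (M+1) → ℕ}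
    (hκ' : κ' = κ ∨ (κ' = κ - 1 ∧ j = κ ∧ 2 ≤ κ))
    (hj1 : 1 ≤ j) (hjκ : j ≤ κ) (ha1 : 1 ≤ a) (haκ' : a ≤ κ') (haj : a ≠ j)
    (hfa : 1 ≤ f a)
    (hy : y ∈ Wset κ' a (fun b => if b = a then f b - 1 else f b) M) :
    Fin.snoc y j ∈ Wset κ j f (M+1) ∧
      (fun s : Fin (M+1) => (Fin.snoc y j : Fin (M+2) → ℕ) s.castSucc) = y := by
  obtain ⟨h0, hlast, hrange, hvisit, hstep, hgrow, hcount⟩ := hy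
  set x : Fin (M+2) → ℕ := Fin.snoc y j with hx
  have key : ∀ s : Fin (M+1), x s.castSucc = y s := fun s => by simp [hx]
  have hxlast : x (Fin.last (M+1)) = j := by simp [hx]
  have hκ'κ : κ' ≤ κ := by rcases hκ' with rfl | ⟨rfl, _, _⟩ <;> omega
  have hκ'1 : 1 ≤ κ' := le_trans ha1 haκ'
  refine ⟨⟨?_, hxlast, ?_, ?_, ?_, ?_, ?_⟩, funext key⟩
  · -- x 0 = 1
    have : (0 : Fin (M+2)) = Fin.castSucc 0 := rfl
    rw [this, key]; exact h0
  · -- range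
    intro t
    induction t using Fin.lastCases with
    | last => rw [hxlast]; exact Finset.mem_Icc.mpr ⟨hj1, hjκ⟩
    | cast i =>
      rw [key]
      have := Finset.mem_Icc.mp (hrange i)
      exact Finset.mem_Icc.mpr ⟨this.1, le_trans this.2 hκ'κ⟩
  · -- visits
    intro v hv
    have hv' := Finset.mem_Icc.mp hv
    by_cases hvκ' : v ≤ κ'
    · obtain ⟨t, ht⟩ := hvisit v (Finset.mem_Icc.mpr ⟨hv'.1, hvκ'⟩)
      exact ⟨t.castSucc, by rw [key]; exact ht⟩
    · have hvj : v = j := by rcases hκ' with rfl | ⟨rfl, rfl, _⟩ <;> omega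
      exact ⟨Fin.last (M+1), by rw [hxlast, hvj]⟩
  · -- steps
    intro t
    induction t using Fin.lastCases with
    | last =>
      rw [Fin.succ_last, hxlast, key]
      rw [hlast]; exact haj
    | cast i =>
      rw [Fin.succ_castSucc, key, key]
      exact hstep i
  · -- growth
    intro t ht0
    induction t using Fin.lastCases with
    | last =>
      obtain ⟨s, hs⟩ := hvisit κ' (Finset.mem_Icc.mpr ⟨hκ'1, le_refl _⟩)
      refine ⟨s.castSucc, Fin.castSucc_lt_last s, ?_⟩
      rw [hxlast, key, hs]
      rcases hκ' with rfl | ⟨rfl, rfl, hκ2⟩ <;> omega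
    | cast i =>
      have hi0 : i ≠ 0 := by
        rintro rfl; exact ht0 rfl
      obtain ⟨i', hi', hle⟩ := hgrow i hi0
      refine ⟨i'.castSucc, by rwa [Fin.castSucc_lt_castSucc_iff], ?_⟩
      rw [key, key]; exact hle
  · -- counts
    intro b
    rw [count_split x b]
    have h1 : (Finset.univ.filter fun t : Fin M => x t.castSucc.castSucc = b).card
        = (Finset.univ.filter fun t : Fin M => y t.castSucc = b).card := by
      apply Finset.card_bij (fun t _ => t) <;> intros <;>
        simp_all [key]
    rw [h1, hcount b]
    have h2 : x (Fin.last M).castSucc = a := by rw [key]; exact hlast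
    rw [h2]
    simp only []
    by_cases hba : b = a
    · subst hba; rw [if_pos rfl, if_pos rfl]; omega
    · rw [if_neg hba, if_neg (fun h => hba h.symm), Nat.add_zero]

lemma trunc_spec {M κ j : ℕ} {f : ℕ → ℕ} {x : Fin (M+2) → ℕ}
    (hκ2 : 2 ≤ κ) (hj1 : 1 ≤ j) (hjκ : j ≤ κ)
    (hx : x ∈ Wset κ j f (M+1)) :
    ∃ a, 1 ≤ a ∧ a ≤ κ ∧ a ≠ j ∧ 1 ≤ f a ∧
      (fun s : Fin (M+1) => x s.castSucc) (Fin.last M) = a ∧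
      (((fun s : Fin (M+1) => x s.castSucc) ∈
          Wset κ a (fun b => if b = a then f b - 1 else f b) M)
       ∨ (j = κ ∧ a ≤ κ - 1 ∧
        (fun s : Fin (M+1) => x s.castSucc) ∈
          Wset (κ-1) a (fun b => if b = a then f b - 1 else f b) M)) := by
  obtain ⟨h0, hlast, hrange, hvisit, hstep, hgrow, hcount⟩ := hx
  set a := x ((Fin.last M).castSucc) with hadef
  set y : Fin (M+1) → ℕ := fun s => x s.castSucc with hy
  have hymem : ∀ t : Fin (M+1), y t = x t.castSucc := fun _ => rfl
  -- basic facts about a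
  have haIcc := Finset.mem_Icc.mp (hrange ((Fin.last M).castSucc))
  have haj : a ≠ j := by
    have := hstep (Fin.last M)
    rw [Fin.succ_last, hlast] at this
    exact this
  -- counts
  have hcount' : ∀ b, (Finset.univ.filter fun t : Fin M => y t.castSucc = b).card
      + (if a = b then 1 else 0) = f b := by
    intro b
    have hs := count_split x b
    rw [hcount b] at hs
    rw [← hs]
  have hfa : 1 ≤ f a := by
    have := hcount' a
    rw [if_pos rfl] at this
    omega
  have hycount : ∀ b, (Finset.univ.filter fun t : Fin M => y t.castSucc = b).card
      = (if b = a then f b - 1 else f b) := by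
    intro b
    have := hcount' b
    by_cases hba : b = a
    · subst hba; rw [if_pos rfl] at this ⊢; omega
    · rw [if_neg (fun h => hba h.symm)] at this
      rw [if_neg hba]; omega
  -- y starts at 1
  have hy0 : y 0 = 1 := by
    rw [hymem, Fin.castSucc_zero]; exact h0
  -- steps for y
  have hystep : ∀ t : Fin M, y t.castSucc ≠ y t.succ := by
    intro t
    rw [hymem, hymem, ← Fin.succ_castSucc]
    exact hstep t.castSucc
  -- growth for y
  have hygrow : ∀ t : Fin (M+1), t ≠ 0 → ∃ t' < t, y t ≤ y t' + 1 := by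
    intro t ht0
    have hc0 : (t.castSucc : Fin (M+2)) ≠ 0 := by
      intro h
      apply ht0
      rw [Fin.ext_iff] at h ⊢
      simpa using h
    obtain ⟨t', ht', hle⟩ := hgrow t.castSucc hc0
    have hlt : t'.val < t.val := ht'
    have hb : t'.val < M + 1 := by have := t.isLt; omega
    refine ⟨⟨t'.val, hb⟩, by simpa [Fin.lt_def] using hlt, ?_⟩
    have e : Fin.castSucc (⟨t'.val, hb⟩ : Fin (M+1)) = t' := by
      rw [Fin.ext_iff]; rfl
    rw [hymem, hymem, e]
    exact hle
  refine ⟨a, haIcc.1, haIcc.2, haj, hfa, rfl, ?_⟩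
  by_cases hc : ∃ t : Fin (M+1), x t.castSucc = j
  · -- case 1 : j is visited before the last step
    left
    refine ⟨hy0, rfl, fun t => hrange t.castSucc, ?_, hystep, hygrow, hycount⟩
    intro v hv
    obtain ⟨T, hT⟩ := hvisit v hv
    induction T using Fin.lastCases with
    | last =>
      obtain ⟨t, ht⟩ := hc
      exact ⟨t, by rw [hymem, ht, ← hT, hlast]⟩
    | cast i => exact ⟨i, hT⟩
  · -- case 2 : j is visited only at the very end
    right
    have hjk : j = κ := by
      by_contra hne
      have hjltκ : j < κ := lt_of_le_of_ne hjκ hne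
      obtain ⟨T, hT⟩ := hvisit κ (Finset.mem_Icc.mpr ⟨by omega, le_refl κ⟩)
      have hTne : T ≠ Fin.last (M+1) := by
        intro h; rw [h, hlast] at hT; omega
      obtain ⟨s', hs', hxs'⟩ := rgs_exists h0 hgrow (M+1) T (by omega) j hj1
        (by rw [hT]; exact hjltκ)
      have hb : s'.val < M + 1 := by
        have h1 : s'.val < T.val := hs'
        have h2 : T.val < M + 1 := by
          rcases lt_or_eq_of_le (Nat.lt_succ_iff.mp T.isLt) with h | h
          · exact h
          · exact absurd (Fin.ext h) hTne
        omega
      apply hc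
      refine ⟨⟨s'.val, hb⟩, ?_⟩
      have e : Fin.castSucc (⟨s'.val, hb⟩ : Fin (M+1)) = s' := by
        rw [Fin.ext_iff]; rfl
      rw [e]; exact hxs'
    have hyrange : ∀ t : Fin (M+1), y t ∈ Finset.Icc 1 (κ - 1) := by
      intro t
      have h1 := Finset.mem_Icc.mp (hrange t.castSucc)
      have h2 : x t.castSucc ≠ κ := by
        intro h; exact hc ⟨t, by rw [h, hjk]⟩
      rw [hymem]
      exact Finset.mem_Icc.mpr ⟨h1.1, by omega⟩
    have haκ1 : a ≤ κ - 1 := (Finset.mem_Icc.mp (hyrange (Fin.last M))).2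
    refine ⟨hjk, haκ1, hy0, rfl, hyrange, ?_, hystep, hygrow, hycount⟩
    intro v hv
    have hv' := Finset.mem_Icc.mp hv
    obtain ⟨T, hT⟩ := hvisit v (Finset.mem_Icc.mpr ⟨hv'.1, by omega⟩)
    induction T using Fin.lastCases with
    | last =>
      exfalso
      rw [hlast] at hT
      omega
    | cast i => exact ⟨i, hT⟩

lemma trunc_injOn {M κ j : ℕ} {f : ℕ → ℕ} :
    Set.InjOn (fun x : Fin (M+2) → ℕ => fun s : Fin (M+1) => x s.castSucc)
      (Wset κ j f (M+1)) := by
  intro x hx x' hx' h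
  funext t
  induction t using Fin.lastCases with
  | last => rw [hx.2.1, hx'.2.1]
  | cast i => exact congrFun h i

lemma sum_sub_one {q a : ℕ} {f : ℕ → ℕ} (ha : a ∈ Finset.Icc 1 q) (hfa : 1 ≤ f a) :
    ∑ b ∈ Finset.Icc 1 q, (if b = a then f b - 1 else f b)
      = (∑ b ∈ Finset.Icc 1 q, f b) - 1 := by
  rw [← Finset.add_sum_erase _ _ ha, ← Finset.add_sum_erase _ (fun b => f b) ha, if_pos rfl]
  rw [Finset.sum_congr rfl (fun b hb => if_neg (Finset.ne_of_mem_erase hb))]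
  have e : ((Finset.Icc 1 q).erase a).sum f = ∑ x ∈ (Finset.Icc 1 q).erase a, f x := rfl
  rw [e]
  omega

/-- The numbers `K^{(κ,q)}_{j;f}` satisfy the recurrence
`K^{(κ,q)}_{j;f} = ∑_{a ∈ [κ], a ≠ j, f - 1_a ∈ ℤ₊^q} K^{(κ,q)}_{a;f-1_a}
  + δ_{κ,j} ∑_{a ∈ [κ-1], f - 1_a ∈ ℤ₊^q} K^{(κ-1,q)}_{a;f-1_a}`
(for `κ ≥ 2`), with the initial conditions
`K^{(1,q)}_{j;f} = δ_{j,1} ∏_{l=1}^q δ_{f_l,0}`. -/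
theorem Kwalk_recurrence (q : ℕ) (hq : 2 ≤ q) (κ j : ℕ) (hκ : κ ≤ q)
    (hj : j ∈ Finset.Icc 1 κ) (f : ℕ → ℕ) (hf0 : f 0 = 0)
    (hfsupp : ∀ b, κ < b → f b = 0) :
    (2 ≤ κ → Kwalk q κ j f =
      (∑ a ∈ (Finset.Icc 1 κ).filter (fun a => a ≠ j ∧ 1 ≤ f a),
        Kwalk q κ a (fun b => if b = a then f b - 1 else f b)) +
      (if j = κ then
        ∑ a ∈ (Finset.Icc 1 (κ - 1)).filter (fun a => 1 ≤ f a),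
          Kwalk q (κ - 1) a (fun b => if b = a then f b - 1 else f b)
       else 0)) ∧
    (κ = 1 → Kwalk q 1 j f =
      if j = 1 ∧ ∀ l ∈ Finset.Icc 1 q, f l = 0 then 1 else 0) := by
  obtain ⟨hj1, hjκ⟩ := Finset.mem_Icc.mp hj
  constructor
  · -- main recurrence
    intro hκ2
    rw [Kwalk_eq_Wset]
    cases hN : (∑ a ∈ Finset.Icc 1 q, f a) with
    | zero =>
      have hempty : Wset κ j f 0 = ∅ := by
        ext x
        simp only [Set.mem_empty_iff_false, iff_false]
        intro hx
        obtain ⟨h0, _, _, hvisit, _, _, _⟩ := hx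
        obtain ⟨t, ht⟩ := hvisit 2 (Finset.mem_Icc.mpr ⟨by omega, hκ2⟩)
        have ht0 : t = 0 := Fin.ext (by omega)
        rw [ht0, h0] at ht
        omega
      rw [hempty, Set.ncard_empty]
      have hzero : ∀ a ∈ Finset.Icc 1 q, f a = 0 :=
        fun a ha => (Finset.sum_eq_zero_iff.mp hN) a ha
      have e1 : (Finset.Icc 1 κ).filter (fun a => a ≠ j ∧ 1 ≤ f a) = ∅ := by
        rw [Finset.filter_eq_empty_iff]
        intro a ha
        have hm := Finset.mem_Icc.mp ha
        have : f a = 0 := hzero a (Finset.mem_Icc.mpr ⟨hm.1, le_trans hm.2 hκ⟩)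
        push_neg
        intro _
        omega
      have e2 : (Finset.Icc 1 (κ-1)).filter (fun a => 1 ≤ f a) = ∅ := by
        rw [Finset.filter_eq_empty_iff]
        intro a ha
        have hm := Finset.mem_Icc.mp ha
        have : f a = 0 := hzero a (Finset.mem_Icc.mpr ⟨hm.1, by omega⟩)
        omega
      rw [e1, e2, Finset.sum_empty, Finset.sum_empty]
      simp
    | succ M =>
      set S := Wset κ j f (M+1) with hS
      set T : (Fin (M+2) → ℕ) → (Fin (M+1) → ℕ) :=
        fun x => fun s : Fin (M+1) => x s.castSucc with hT
      have hsum : ∀ a, 1 ≤ a → a ≤ q → 1 ≤ f a →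
          (∑ b ∈ Finset.Icc 1 q, (if b = a then f b - 1 else f b)) = M := by
        intro a h1 h2 h3
        rw [sum_sub_one (Finset.mem_Icc.mpr ⟨h1, h2⟩) h3, hN]
        omega
      set F1 := (Finset.Icc 1 κ).filter (fun a => a ≠ j ∧ 1 ≤ f a) with hF1
      set F2 := (Finset.Icc 1 (κ-1)).filter (fun a => 1 ≤ f a) with hF2
      have himg : T '' S =
          (⋃ a ∈ F1, Wset κ a (fun b => if b = a then f b - 1 else f b) M) ∪
          (if j = κ then
            (⋃ a ∈ F2, Wset (κ-1) a (fun b => if b = a then f b - 1 else f b) M)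
           else ∅) := by
        ext y
        constructor
        · rintro ⟨x, hx, rfl⟩
          obtain ⟨a, ha1, haκ, haj, hfa, hlasta, hcase⟩ := trunc_spec hκ2 hj1 hjκ hx
          rcases hcase with hmem | ⟨hjk, haκ1, hmem⟩
          · left
            exact Set.mem_iUnion₂.mpr
              ⟨a, Finset.mem_filter.mpr ⟨Finset.mem_Icc.mpr ⟨ha1, haκ⟩, haj, hfa⟩, hmem⟩
          · right
            rw [if_pos hjk]
            exact Set.mem_iUnion₂.mpr
              ⟨a, Finset.mem_filter.mpr ⟨Finset.mem_Icc.mpr ⟨ha1, haκ1⟩, hfa⟩, hmem⟩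
        · intro hy
          rcases hy with hy | hy
          · obtain ⟨a, haF, hmem⟩ := Set.mem_iUnion₂.mp hy
            rw [Finset.mem_filter, Finset.mem_Icc] at haF
            obtain ⟨⟨ha1, haκ⟩, haj, hfa⟩ := haF
            obtain ⟨hxmem, hTx⟩ :=
              snoc_mem (Or.inl rfl) hj1 hjκ ha1 haκ haj hfa hmem
            exact ⟨Fin.snoc y j, hxmem, hTx⟩
          · by_cases hjk : j = κ
            · rw [if_pos hjk] at hy
              obtain ⟨a, haF, hmem⟩ := Set.mem_iUnion₂.mp hy
              rw [Finset.mem_filter, Finset.mem_Icc] at haF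
              obtain ⟨⟨ha1, haκ1⟩, hfa⟩ := haF
              obtain ⟨hxmem, hTx⟩ :=
                snoc_mem (Or.inr ⟨rfl, hjk, hκ2⟩) hj1 hjκ ha1 haκ1
                  (by omega) hfa hmem
              exact ⟨Fin.snoc y j, hxmem, hTx⟩
            · rw [if_neg hjk] at hy
              exact absurd hy (Set.notMem_empty y)
      have hU1fin : (⋃ a ∈ F1,
          Wset κ a (fun b => if b = a then f b - 1 else f b) M).Finite :=
        Set.Finite.biUnion F1.finite_toSet (fun a _ => Wset_finite _ _ _ _)
      have hU2fin : (if j = κ then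
          (⋃ a ∈ F2, Wset (κ-1) a (fun b => if b = a then f b - 1 else f b) M)
          else ∅).Finite := by
        split_ifs
        · exact Set.Finite.biUnion F2.finite_toSet (fun a _ => Wset_finite _ _ _ _)
        · exact Set.finite_empty
      have hdisjU : Disjoint
          (⋃ a ∈ F1, Wset κ a (fun b => if b = a then f b - 1 else f b) M)
          (if j = κ then
            (⋃ a ∈ F2, Wset (κ-1) a (fun b => if b = a then f b - 1 else f b) M)
           else ∅) := by
        split_ifs
        · rw [Set.disjoint_left]
          intro y hy1 hy2
          obtain ⟨a, haF, hmem1⟩ := Set.mem_iUnion₂.mp hy1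
          obtain ⟨a', haF', hmem2⟩ := Set.mem_iUnion₂.mp hy2
          obtain ⟨t, ht⟩ := hmem1.2.2.2.1 κ (Finset.mem_Icc.mpr ⟨by omega, le_refl κ⟩)
          have := Finset.mem_Icc.mp (hmem2.2.2.1 t)
          omega
        · exact Set.disjoint_empty _
      have hdA : ∀ a ∈ F1, ∀ a' ∈ F1, a ≠ a' →
          Disjoint (Wset κ a (fun b => if b = a then f b - 1 else f b) M)
            (Wset κ a' (fun b => if b = a' then f b - 1 else f b) M) := by
        intro a _ a' _ hne
        rw [Set.disjoint_left]
        intro y hy1 hy2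
        exact hne (hy1.2.1 ▸ hy2.2.1 ▸ rfl)
      have hdB : ∀ a ∈ F2, ∀ a' ∈ F2, a ≠ a' →
          Disjoint (Wset (κ-1) a (fun b => if b = a then f b - 1 else f b) M)
            (Wset (κ-1) a' (fun b => if b = a' then f b - 1 else f b) M) := by
        intro a _ a' _ hne
        rw [Set.disjoint_left]
        intro y hy1 hy2
        exact hne (hy1.2.1 ▸ hy2.2.1 ▸ rfl)
      calc S.ncard = (T '' S).ncard := (Set.ncard_image_of_injOn trunc_injOn).symm
        _ = _ := by
          rw [himg, Set.ncard_union_eq hdisjU hU1fin hU2fin,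
            ncard_biUnion' F1 _ (fun a _ => Wset_finite _ _ _ _) hdA]
          congr 1
          · apply Finset.sum_congr rfl
            intro a ha
            rw [hF1, Finset.mem_filter, Finset.mem_Icc] at ha
            rw [Kwalk_eq_Wset, hsum a ha.1.1 (le_trans ha.1.2 hκ) ha.2.2]
          · split_ifs with hjk
            · rw [ncard_biUnion' F2 _ (fun a _ => Wset_finite _ _ _ _) hdB]
              apply Finset.sum_congr rfl
              intro a ha
              rw [hF2, Finset.mem_filter, Finset.mem_Icc] at ha
              rw [Kwalk_eq_Wset, hsum a ha.1.1 (by omega) ha.2]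
            · exact Set.ncard_empty _
  · -- initial condition
    intro hκ1
    subst hκ1
    have hj1' : j = 1 := by omega
    have hsum : (∑ a ∈ Finset.Icc 1 q, f a) = f 1 := by
      apply Finset.sum_eq_single_of_mem 1 (Finset.mem_Icc.mpr ⟨le_refl 1, by omega⟩)
      intro b hb hne
      have := Finset.mem_Icc.mp hb
      exact hfsupp b (by omega)
    by_cases hf1 : f 1 = 0
    · have hall : ∀ l ∈ Finset.Icc 1 q, f l = 0 := by
        intro l hl
        have := Finset.mem_Icc.mp hl
        rcases Nat.eq_or_lt_of_le this.1 with h | h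
        · rw [← h]; exact hf1
        · exact hfsupp l h
      rw [if_pos ⟨hj1', hall⟩, Kwalk_eq_Wset]
      have hz : (∑ a ∈ Finset.Icc 1 q, f a) = 0 := by rw [hsum, hf1]
      rw [hz]
      have hsing : Wset 1 j f 0 = {fun _ => 1} := by
        ext x
        simp only [Set.mem_singleton_iff]
        constructor
        · intro hx
          funext t
          have ht : t = 0 := Fin.ext (by omega)
          rw [ht, hx.1]
        · rintro rfl
          refine ⟨rfl, hj1'.symm, ?_, ?_, ?_, ?_, ?_⟩
          · intro t; exact Finset.mem_Icc.mpr ⟨le_refl 1, le_refl 1⟩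
          · intro v hv
            have := Finset.mem_Icc.mp hv
            refine ⟨0, ?_⟩
            show (1 : ℕ) = v
            omega
          · intro t; exact t.elim0
          · intro t ht0
            exact absurd (Fin.ext (by omega)) ht0
          · intro b
            have hfb : f b = 0 := by
              match b, hf0, hf1 with
              | 0, h, _ => exact h
              | 1, _, h => exact h
              | (n+2), _, _ => exact hfsupp (n+2) (by omega)
            rw [hfb]
            simp
      rw [hsing, Set.ncard_singleton]
    · rw [if_neg (by
        rintro ⟨-, hall⟩
        exact hf1 (hall 1 (Finset.mem_Icc.mpr ⟨le_refl 1, by omega⟩)))]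
      rw [Kwalk_eq_Wset]
      have hne : (∑ a ∈ Finset.Icc 1 q, f a) ≠ 0 := by rw [hsum]; exact hf1
      obtain ⟨M, hM⟩ := Nat.exists_eq_succ_of_ne_zero hne
      rw [hM]
      show (Wset 1 j f (M+1)).ncard = 0
      have hempty : Wset 1 j f (M+1) = ∅ := by
        ext x
        simp only [Set.mem_empty_iff_false, iff_false]
        intro hx
        obtain ⟨h0, _, hrange, _, hstep, _, _⟩ := hx
        have h1 := Finset.mem_Icc.mp (hrange (Fin.castSucc 0))
        have h2 := Finset.mem_Icc.mp (hrange (Fin.succ 0))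
        exact hstep 0 (by omega)
      rw [hempty, Set.ncard_empty]
end

section
/- Let q ≥ 2, k ≥ 1, N ∈ ℕ, and let w ∈ W_k^{(N)} be a closed walk of k steps with N ≥ |V_w|. Then the number of closed walks in W_k^{(N)} equivalent to w equals N·(N−1)···(N−|V_w|+1) · ∏_{∅ ≠ α ⊆ E_w} 1/|β_α(w)|!, where for each nonempty subset α of the edge set E_w, β_α(w) := ((∩_{e∈α} e) \ (∪_{e∈E_w \ α} e)) \ Ṽ_w is the set of never-visited vertices lying in exactly the edges of α. -/
open Finset MeasureTheory ProbabilityTheory Filter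
open scoped Classical

noncomputable section

variable {V : Type} [DecidableEq V]

namespace CardEquivAux

variable {N k : ℕ}

lemma visited_subset (w : WalkData (Fin N) k) : visited w ⊆ vertSet w :=
  Finset.subset_union_right

lemma walkVert_mem_visited (w : WalkData (Fin N) k) (i : Fin (k + 1)) :
    w.1 i ∈ visited w := Finset.mem_image_of_mem w.1 (Finset.mem_univ i)

lemma walkVert_mem (w : WalkData (Fin N) k) (i : Fin (k + 1)) : w.1 i ∈ vertSet w :=
  visited_subset w (walkVert_mem_visited w i)

lemma edge_subset (w : WalkData (Fin N) k) (i : Fin k) : w.2 i ⊆ vertSet w :=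
  fun x hx => Finset.mem_union_left _ (Finset.mem_sup.2 ⟨i, Finset.mem_univ i, hx⟩)

/-- Extend a function on the vertex set to all of `Fin N`. -/
def extFun (w : WalkData (Fin N) k) (φ : {v // v ∈ vertSet w} → Fin N) : Fin N → Fin N :=
  fun v => if h : v ∈ vertSet w then φ ⟨v, h⟩ else v

lemma extFun_apply (w : WalkData (Fin N) k) (φ : {v // v ∈ vertSet w} → Fin N)
    (v : {v // v ∈ vertSet w}) : extFun w φ v.1 = φ v := by
  simp [extFun, v.2]

lemma extFun_injOn (w : WalkData (Fin N) k) (φ : {v // v ∈ vertSet w} ↪ Fin N) :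
    Set.InjOn (extFun w φ) (vertSet w) := by
  intro a ha b hb hab
  rw [Finset.mem_coe] at ha hb
  rw [extFun_apply w φ ⟨a, ha⟩, extFun_apply w φ ⟨b, hb⟩] at hab
  exact congrArg Subtype.val (φ.injective hab)

/-- The walk obtained from `w` by relabeling along an embedding of its vertex set. -/
def liftWalk (w : WalkData (Fin N) k) (φ : {v // v ∈ vertSet w} ↪ Fin N) :
    WalkData (Fin N) k :=
  (fun i => extFun w φ (w.1 i), fun i => (w.2 i).image (extFun w φ))

lemma liftWalk_mem (q : ℕ) (w : WalkData (Fin N) k) (hw : IsClosedWalk q k w)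
    (φ : {v // v ∈ vertSet w} ↪ Fin N) :
    IsClosedWalk q k (liftWalk w φ) ∧ WalkEquiv w (liftWalk w φ) := by
  constructor
  · refine ⟨by simp [liftWalk, hw.1], fun i => ?_, fun i => ?_⟩
    · rw [liftWalk]
      rw [Finset.card_image_of_injOn ((extFun_injOn w φ).mono (by
        exact_mod_cast edge_subset w i))]
      exact hw.2.1 i
    · exact ⟨Finset.mem_image_of_mem _ (hw.2.2 i).1, Finset.mem_image_of_mem _ (hw.2.2 i).2⟩
  · exact ⟨extFun w φ, extFun_injOn w φ, fun i => rfl, fun i => rfl⟩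

/-- Surjectivity: every walk equivalent to `w` arises as a `liftWalk`. -/
lemma exists_liftWalk_eq (w : WalkData (Fin N) k) (w' : WalkData (Fin N) k)
    (h : WalkEquiv w w') : ∃ φ : {v // v ∈ vertSet w} ↪ Fin N, liftWalk w φ = w' := by
  obtain ⟨ψ, hinj, h1, h2⟩ := h
  refine ⟨⟨fun v => ψ v.1, fun a b hab => Subtype.ext (hinj (Finset.mem_coe.2 a.2)
    (Finset.mem_coe.2 b.2) hab)⟩, ?_⟩
  have hext : ∀ v ∈ vertSet w, extFun w
      (⟨fun v => ψ v.1, fun a b hab => Subtype.ext (hinj (Finset.mem_coe.2 a.2)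
        (Finset.mem_coe.2 b.2) hab)⟩ : {v // v ∈ vertSet w} ↪ Fin N) v = ψ v := by
    intro v hv
    simp [extFun, hv]
    rfl
  refine Prod.ext (funext fun i => ?_) (funext fun i => ?_)
  · rw [liftWalk]; dsimp only
    rw [hext _ (walkVert_mem w i), h1 i]
  · rw [liftWalk]; dsimp only
    rw [h2 i]
    exact Finset.image_congr fun x hx => hext x (edge_subset w i hx)



/-- Coloring of the vertices: visited vertices by themselves, other vertices by the
set of edges containing them. -/
def color (w : WalkData (Fin N) k) (v : Fin N) : Fin N ⊕ Finset (Finset (Fin N)) :=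
  if v ∈ visited w then Sum.inl v else Sum.inr ((edgeSet w).filter (v ∈ ·))

def colorS (w : WalkData (Fin N) k) (v : {v // v ∈ vertSet w}) :
    Fin N ⊕ Finset (Finset (Fin N)) := color w v.1

lemma fix_of_stab {w : WalkData (Fin N) k} {σ : Equiv.Perm {v // v ∈ vertSet w}}
    (hσ : colorS w ∘ σ = colorS w) {v} (hv : v.1 ∈ visited w) : σ v = v := by
  have h := congrFun hσ v
  simp only [Function.comp_apply, colorS, color, if_pos hv] at h
  by_cases h2 : (σ v).1 ∈ visited w
  · rw [if_pos h2] at h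
    exact Subtype.ext (Sum.inl.inj h)
  · rw [if_neg h2] at h
    exact absurd h (by simp)

lemma not_visited_of_stab {w : WalkData (Fin N) k} {σ : Equiv.Perm {v // v ∈ vertSet w}}
    (hσ : colorS w ∘ σ = colorS w) {v} (hv : v.1 ∉ visited w) : (σ v).1 ∉ visited w := by
  intro h
  have h4 : σ v = v := σ.injective (fix_of_stab hσ h)
  rw [h4] at h
  exact hv h

lemma edge_iff_of_stab {w : WalkData (Fin N) k} {σ : Equiv.Perm {v // v ∈ vertSet w}}
    (hσ : colorS w ∘ σ = colorS w) (v) (i : Fin k) :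
    v.1 ∈ w.2 i ↔ (σ v).1 ∈ w.2 i := by
  by_cases hv : v.1 ∈ visited w
  · rw [fix_of_stab hσ hv]
  · have hσv := not_visited_of_stab hσ hv
    have h := congrFun hσ v
    simp only [Function.comp_apply, colorS, color, if_neg hv, if_neg hσv] at h
    have h' := Sum.inr.inj h
    have he : w.2 i ∈ edgeSet w := Finset.mem_image_of_mem w.2 (Finset.mem_univ i)
    constructor
    · intro hx
      have : w.2 i ∈ (edgeSet w).filter (v.1 ∈ ·) := Finset.mem_filter.2 ⟨he, hx⟩
      rw [← h'] at this
      exact (Finset.mem_filter.1 this).2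
    · intro hx
      have : w.2 i ∈ (edgeSet w).filter ((σ v).1 ∈ ·) := Finset.mem_filter.2 ⟨he, hx⟩
      rw [h'] at this
      exact (Finset.mem_filter.1 this).2

lemma stab_of {w : WalkData (Fin N) k} {σ : Equiv.Perm {v // v ∈ vertSet w}}
    (h1 : ∀ v, v.1 ∈ visited w → σ v = v)
    (h2 : ∀ (i : Fin k) v, v.1 ∈ w.2 i ↔ (σ v).1 ∈ w.2 i) :
    colorS w ∘ σ = colorS w := by
  funext v
  simp only [Function.comp_apply, colorS, color]
  by_cases hv : v.1 ∈ visited w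
  · rw [h1 v hv]
  · have hσv : (σ v).1 ∉ visited w := by
      intro h
      have := σ.injective (h1 (σ v) h)
      rw [this] at h
      exact hv h
    rw [if_neg hv, if_neg hσv]
    congr 1
    apply Finset.filter_congr
    intro e he
    obtain ⟨i, _, rfl⟩ := Finset.mem_image.1 he
    exact (h2 i v).symm


lemma extFun_apply' (w : WalkData (Fin N) k) (φ : {v // v ∈ vertSet w} → Fin N)
    {v : Fin N} (h : v ∈ vertSet w) : extFun w φ v = φ ⟨v, h⟩ := dif_pos h

lemma fiber_visited_eq (w : WalkData (Fin N) k) (w' : WalkData (Fin N) k)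
    (φ : {v // v ∈ vertSet w} ↪ Fin N) (hφ : liftWalk w φ = w') {v : {v // v ∈ vertSet w}}
    (i : Fin (k + 1)) (hi : w.1 i = v.1) : φ v = w'.1 i := by
  have e1 : extFun w ⇑φ (w.1 i) = w'.1 i := by rw [← hφ]; rfl
  rw [← e1, hi, extFun_apply w φ v]

lemma lift_trans (w : WalkData (Fin N) k) (w' : WalkData (Fin N) k)
    (φ₀ : {v // v ∈ vertSet w} ↪ Fin N) (hφ₀ : liftWalk w φ₀ = w')
    (σ : Equiv.Perm {v // v ∈ vertSet w}) (hσ : colorS w ∘ σ = colorS w) :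
    liftWalk w (σ.toEmbedding.trans φ₀) = w' := by
  subst hφ₀
  refine Prod.ext (funext fun i => ?_) (funext fun i => ?_)
  · show extFun w (σ.toEmbedding.trans φ₀) (w.1 i) = extFun w φ₀ (w.1 i)
    rw [extFun_apply w _ ⟨w.1 i, walkVert_mem w i⟩, extFun_apply w _ ⟨w.1 i, walkVert_mem w i⟩]
    show φ₀ (σ _) = φ₀ _
    rw [fix_of_stab hσ (walkVert_mem_visited w i)]
  · show (w.2 i).image (extFun w (σ.toEmbedding.trans φ₀)) = (w.2 i).image (extFun w φ₀)
    set σ' : Fin N → Fin N := extFun w (fun v => ((σ v) : Fin N)) with hσ'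
    have h1 : ∀ x ∈ w.2 i, extFun w (σ.toEmbedding.trans φ₀) x = extFun w φ₀ (σ' x) := by
      intro x hx
      have hxS : x ∈ vertSet w := edge_subset w i hx
      rw [extFun_apply w _ ⟨x, hxS⟩, hσ', extFun_apply w _ ⟨x, hxS⟩,
        extFun_apply w _ (σ ⟨x, hxS⟩)]
      rfl
    rw [Finset.image_congr h1,
      show (fun x => extFun w (⇑φ₀) (σ' x)) = (extFun w ⇑φ₀) ∘ σ' from rfl,
      ← Finset.image_image]
    have hsub : (w.2 i).image σ' ⊆ w.2 i := by
      intro y hy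
      obtain ⟨x, hx, rfl⟩ := Finset.mem_image.1 hy
      have hxS : x ∈ vertSet w := edge_subset w i hx
      rw [hσ', extFun_apply w _ ⟨x, hxS⟩]
      exact (edge_iff_of_stab hσ ⟨x, hxS⟩ i).1 hx
    have hinj : Set.InjOn σ' (w.2 i) := by
      intro a ha b hb hab
      have haS : a ∈ vertSet w := edge_subset w i (by exact_mod_cast ha)
      have hbS : b ∈ vertSet w := edge_subset w i (by exact_mod_cast hb)
      rw [hσ', extFun_apply w _ ⟨a, haS⟩, extFun_apply w _ ⟨b, hbS⟩] at hab
      exact congrArg Subtype.val (σ.injective (Subtype.ext hab))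
    rw [Finset.eq_of_subset_of_card_le hsub
      (le_of_eq (Finset.card_image_of_injOn hinj).symm)]

lemma fiber_card (w : WalkData (Fin N) k) (w' : WalkData (Fin N) k)
    (φ₀ : {v // v ∈ vertSet w} ↪ Fin N) (hφ₀ : liftWalk w φ₀ = w') :
    Fintype.card {φ : {v // v ∈ vertSet w} ↪ Fin N // liftWalk w φ = w'} =
      ∏ i : Fin N ⊕ Finset (Finset (Fin N)),
        (Fintype.card {v : {v // v ∈ vertSet w} // colorS w v = i}).factorial := by
  rw [← DomMulAct.stabilizer_card (colorS w)]
  refine (Fintype.card_of_bijective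
    (f := fun σ : {g : Equiv.Perm {v // v ∈ vertSet w} // colorS w ∘ g = colorS w} =>
      (⟨σ.1.toEmbedding.trans φ₀, lift_trans w w' φ₀ hφ₀ σ.1 σ.2⟩ :
        {φ : {v // v ∈ vertSet w} ↪ Fin N // liftWalk w φ = w'})) ⟨?_, ?_⟩).symm
  · intro σ₁ σ₂ h
    refine Subtype.ext (Equiv.ext fun v => φ₀.injective ?_)
    have h2' := DFunLike.congr_fun (congrArg Subtype.val h) v
    simpa using h2'
  · rintro ⟨φ, hφ⟩
    -- every element of the fiber has the same image as φ₀
    have hexists : ∀ v : {v // v ∈ vertSet w}, ∃ u : {v // v ∈ vertSet w}, φ₀ u = φ v := by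
      intro v
      rcases Finset.mem_union.1 v.2 with hv | hv
      · obtain ⟨i, _, hi⟩ := Finset.mem_sup.1 hv
        have h1 : φ v ∈ (w.2 i).image (extFun w φ) := by
          rw [← extFun_apply w φ v]
          exact Finset.mem_image_of_mem _ hi
        have h2 : (w.2 i).image (extFun w φ) = (w.2 i).image (extFun w φ₀) := by
          have e1 : (liftWalk w φ).2 i = w'.2 i := by rw [hφ]
          have e2 : (liftWalk w φ₀).2 i = w'.2 i := by rw [hφ₀]
          exact e1.trans e2.symm
        rw [h2] at h1
        obtain ⟨x, hx, hxe⟩ := Finset.mem_image.1 h1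
        have hxS : x ∈ vertSet w := edge_subset w i hx
        rw [extFun_apply' w ⇑φ₀ hxS] at hxe
        exact ⟨⟨x, hxS⟩, hxe⟩
      · obtain ⟨i, _, hi⟩ := Finset.mem_image.1 hv
        exact ⟨v, (fiber_visited_eq w w' φ₀ hφ₀ i hi).trans
          (fiber_visited_eq w w' φ hφ i hi).symm⟩
    choose σfun hσfun using hexists
    have hσinj : Function.Injective σfun := by
      intro a b hab
      apply φ.injective
      rw [← hσfun a, ← hσfun b, hab]
    have hσbij := Finite.injective_iff_bijective.1 hσinj
    set σ₀ := Equiv.ofBijective σfun hσbij with hσ₀def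
    have hσ₀app : ∀ v, φ₀ (σ₀ v) = φ v := hσfun
    -- key membership equivalences
    have hfix : ∀ v : {v // v ∈ vertSet w}, v.1 ∈ visited w → σ₀ v = v := by
      intro v hv
      obtain ⟨i, _, hi⟩ := Finset.mem_image.1 hv
      apply φ₀.injective
      rw [hσ₀app v, fiber_visited_eq w w' φ hφ i hi, fiber_visited_eq w w' φ₀ hφ₀ i hi]
    have hedge : ∀ (i : Fin k) (v : {v // v ∈ vertSet w}),
        v.1 ∈ w.2 i ↔ (σ₀ v).1 ∈ w.2 i := by
      intro i v
      have h2 : (w.2 i).image (extFun w φ) = (w.2 i).image (extFun w φ₀) := by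
        have e1 : (liftWalk w φ).2 i = w'.2 i := by rw [hφ]
        have e2 : (liftWalk w φ₀).2 i = w'.2 i := by rw [hφ₀]
        exact e1.trans e2.symm
      constructor
      · intro hx
        have h1 : φ v ∈ (w.2 i).image (extFun w φ₀) := by
          rw [← h2, ← extFun_apply w φ v]
          exact Finset.mem_image_of_mem _ hx
        obtain ⟨x, hx', hxe⟩ := Finset.mem_image.1 h1
        have hxS : x ∈ vertSet w := edge_subset w i hx'
        rw [extFun_apply' w ⇑φ₀ hxS] at hxe
        have hs : σ₀ v = ⟨x, hxS⟩ := φ₀.injective (by rw [hσ₀app v, ← hxe])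
        rw [hs]
        exact hx'
      · intro hx
        have h1 : φ v ∈ (w.2 i).image (extFun w φ) := by
          rw [h2, ← hσ₀app v, ← extFun_apply w φ₀ (σ₀ v)]
          exact Finset.mem_image_of_mem _ hx
        obtain ⟨x, hx', hxe⟩ := Finset.mem_image.1 h1
        have hxS : x ∈ vertSet w := edge_subset w i hx'
        rw [extFun_apply' w ⇑φ hxS] at hxe
        have hvv : v = ⟨x, hxS⟩ := (φ.injective hxe).symm
        rw [hvv]
        exact hx'
    refine ⟨⟨σ₀, stab_of hfix hedge⟩, ?_⟩
    apply Subtype.ext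
    apply Function.Embedding.ext
    intro v
    exact hσ₀app v

lemma mem_inf_id {α : Finset (Finset (Fin N))} (hne : α.Nonempty) {a : Fin N} :
    a ∈ α.inf id ↔ ∀ e ∈ α, a ∈ e := by
  rw [← Finset.inf'_eq_inf hne]
  exact Finset.mem_inf' hne

lemma colorS_eq_inr_iff (w : WalkData (Fin N) k) {α : Finset (Finset (Fin N))}
    (hα : α ⊆ edgeSet w) (hne : α.Nonempty) (v : {v // v ∈ vertSet w}) :
    colorS w v = Sum.inr α ↔ v.1 ∈ (α.inf id \ (edgeSet w \ α).sup id) \ visited w := by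
  constructor
  · intro h
    have hT : v.1 ∉ visited w := by
      intro hT
      simp only [colorS, color, if_pos hT] at h
      exact absurd h (by simp)
    simp only [colorS, color, if_neg hT] at h
    have hfil : (edgeSet w).filter (v.1 ∈ ·) = α := Sum.inr.inj h
    refine Finset.mem_sdiff.2 ⟨Finset.mem_sdiff.2 ⟨?_, ?_⟩, hT⟩
    · refine (mem_inf_id hne).2 fun e he => ?_
      have hmem : e ∈ (edgeSet w).filter (v.1 ∈ ·) := by rw [hfil]; exact he
      exact (Finset.mem_filter.1 hmem).2
    · intro hsup
      obtain ⟨e, he, hxe⟩ := Finset.mem_sup.1 hsup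
      obtain ⟨heE, heα⟩ := Finset.mem_sdiff.1 he
      exact heα (by rw [← hfil]; exact Finset.mem_filter.2 ⟨heE, hxe⟩)
  · intro h
    obtain ⟨h1, hT⟩ := Finset.mem_sdiff.1 h
    obtain ⟨hinf, hsup⟩ := Finset.mem_sdiff.1 h1
    simp only [colorS, color, if_neg hT]
    congr 1
    ext e
    simp only [Finset.mem_filter]
    constructor
    · rintro ⟨heE, hve⟩
      by_contra hc
      exact hsup (Finset.mem_sup.2 ⟨e, Finset.mem_sdiff.2 ⟨heE, hc⟩, hve⟩)
    · intro he
      exact ⟨hα he, (mem_inf_id hne).1 hinf e he⟩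

lemma card_colorclass_inr (w : WalkData (Fin N) k) {α : Finset (Finset (Fin N))}
    (hα : α ⊆ edgeSet w) (hne : α.Nonempty) :
    Fintype.card {v : {v // v ∈ vertSet w} // colorS w v = Sum.inr α} =
      ((α.inf id \ (edgeSet w \ α).sup id) \ visited w).card := by
  have hsub : (α.inf id \ (edgeSet w \ α).sup id) \ visited w ⊆ vertSet w := by
    intro x hx
    obtain ⟨h1, _⟩ := Finset.mem_sdiff.1 hx
    obtain ⟨hinf, _⟩ := Finset.mem_sdiff.1 h1
    obtain ⟨e, he⟩ := id hne
    obtain ⟨i, _, rfl⟩ := Finset.mem_image.1 (hα he)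
    exact Finset.mem_union_left _ (Finset.mem_sup.2
      ⟨i, Finset.mem_univ i, (mem_inf_id hne).1 hinf _ he⟩)
  rw [Fintype.card_congr (Equiv.subtypeEquivRight (colorS_eq_inr_iff w hα hne))]
  rw [Fintype.card_congr
    (⟨fun v => (⟨v.1.1, v.2⟩ : {x // x ∈ (α.inf id \ (edgeSet w \ α).sup id) \ visited w}),
      fun x => ⟨⟨x.1, hsub x.2⟩, x.2⟩, fun v => by ext; rfl, fun x => rfl⟩ :
      {v : {v // v ∈ vertSet w} // v.1 ∈ (α.inf id \ (edgeSet w \ α).sup id) \ visited w} ≃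
        {x // x ∈ (α.inf id \ (edgeSet w \ α).sup id) \ visited w})]
  exact Fintype.card_coe _

lemma card_colorclass_inr_zero (w : WalkData (Fin N) k) {α : Finset (Finset (Fin N))}
    (hα : α ∉ (edgeSet w).powerset.filter (· ≠ ∅)) :
    Fintype.card {v : {v // v ∈ vertSet w} // colorS w v = Sum.inr α} = 0 := by
  rw [Fintype.card_eq_zero_iff]
  constructor
  intro v
  have hT : v.1.1 ∉ visited w := by
    intro hT
    have hv2 := v.2
    simp only [colorS, color, if_pos hT] at hv2
    exact absurd hv2 (by simp)
  have hfil : (edgeSet w).filter (v.1.1 ∈ ·) = α := by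
    have hv2 := v.2
    simp only [colorS, color, if_neg hT] at hv2
    exact Sum.inr.inj hv2
  apply hα
  rw [Finset.mem_filter, Finset.mem_powerset, ← hfil]
  refine ⟨Finset.filter_subset _ _, ?_⟩
  rcases Finset.mem_union.1 v.1.2 with hv | hv
  · obtain ⟨i, _, hi⟩ := Finset.mem_sup.1 hv
    exact Finset.ne_empty_of_mem (Finset.mem_filter.2
      ⟨Finset.mem_image_of_mem w.2 (Finset.mem_univ i), hi⟩)
  · exact absurd hv hT

lemma prod_card_colorclass (w : WalkData (Fin N) k) :
    ∏ i : Fin N ⊕ Finset (Finset (Fin N)),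
        (Fintype.card {v : {v // v ∈ vertSet w} // colorS w v = i}).factorial =
      ∏ α ∈ (edgeSet w).powerset.filter (· ≠ ∅),
        ((α.inf id \ (edgeSet w \ α).sup id) \ visited w).card.factorial := by
  rw [Fintype.prod_sum_type]
  have hinl : ∀ t : Fin N,
      (Fintype.card {v : {v // v ∈ vertSet w} // colorS w v = Sum.inl t}).factorial = 1 := by
    intro t
    have hle : Fintype.card {v : {v // v ∈ vertSet w} // colorS w v = Sum.inl t} ≤ 1 := by
      apply Fintype.card_le_one_iff.2
      intro a b
      have key : ∀ x : {v : {v // v ∈ vertSet w} // colorS w v = Sum.inl t}, x.1.1 = t := by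
        intro x
        have hx := x.2
        by_cases h : x.1.1 ∈ visited w
        · simp only [colorS, color, if_pos h] at hx
          exact Sum.inl.inj hx
        · simp only [colorS, color, if_neg h] at hx
          exact absurd hx (by simp)
      exact Subtype.ext (Subtype.ext ((key a).trans (key b).symm))
    rcases Nat.le_one_iff_eq_zero_or_eq_one.1 hle with h | h <;> rw [h] <;> rfl
  rw [Finset.prod_eq_one fun t _ => hinl t, one_mul]
  rw [← Finset.prod_subset (Finset.subset_univ ((edgeSet w).powerset.filter (· ≠ ∅)))
    (fun α _ hα => by rw [card_colorclass_inr_zero w hα]; rfl)]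
  refine Finset.prod_congr rfl fun α hα => ?_
  obtain ⟨hαE, hαne⟩ := Finset.mem_filter.1 hα
  rw [card_colorclass_inr w (Finset.mem_powerset.1 hαE)
    (Finset.nonempty_iff_ne_empty.2 hαne)]

end CardEquivAux

/-- The number of closed walks of `k` steps over `[N]` equivalent to a given
walk `w` equals `N (N-1) ⋯ (N - |V_w| + 1) ⬝ ∏_{∅ ≠ α ⊆ E_w} 1 / |β_α(w)|!`, where
`β_α(w) = ((⋂_{e ∈ α} e) \ (⋃_{e ∈ E_w \ α} e)) \ Ṽ_w` is the set of never-visited vertices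
lying in exactly the edges of `α`. -/


theorem card_equivalence_class (q : ℕ) (hq : 2 ≤ q) (k : ℕ) (hk : 1 ≤ k) (N : ℕ)
    (w : WalkData (Fin N) k) (hw : IsClosedWalk q k w) (hN : (vertSet w).card ≤ N) :
    ((Finset.univ.filter fun w' : WalkData (Fin N) k =>
        IsClosedWalk q k w' ∧ WalkEquiv w w').card : ℝ) =
      (Nat.descFactorial N (vertSet w).card : ℝ) *
        ∏ α ∈ (edgeSet w).powerset.filter (· ≠ ∅),
          ((Nat.factorial ((α.inf id \ (edgeSet w \ α).sup id) \ visited w).card : ℝ))⁻¹ := by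
  classical
  set M : ℕ := ∏ α ∈ (edgeSet w).powerset.filter (· ≠ ∅),
    ((α.inf id \ (edgeSet w \ α).sup id) \ visited w).card.factorial with hM
  have key : N.descFactorial (vertSet w).card =
      (Finset.univ.filter fun w' : WalkData (Fin N) k =>
        IsClosedWalk q k w' ∧ WalkEquiv w w').card * M := by
    have h0 : Fintype.card ({v // v ∈ vertSet w} ↪ Fin N) =
        N.descFactorial (vertSet w).card := by
      rw [Fintype.card_embedding_eq, Fintype.card_fin, Fintype.card_coe]
    rw [← h0, ← Finset.card_univ]
    rw [Finset.card_eq_sum_card_fiberwise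
      (f := CardEquivAux.liftWalk w)
      (t := Finset.univ.filter fun w' : WalkData (Fin N) k =>
        IsClosedWalk q k w' ∧ WalkEquiv w w')
      (fun φ _ => Finset.mem_filter.2
        ⟨Finset.mem_univ _, CardEquivAux.liftWalk_mem q w hw φ⟩)]
    have hfib : ∀ w' ∈ (Finset.univ.filter fun w' : WalkData (Fin N) k =>
        IsClosedWalk q k w' ∧ WalkEquiv w w'),
        (Finset.univ.filter fun φ : {v // v ∈ vertSet w} ↪ Fin N =>
          CardEquivAux.liftWalk w φ = w').card = M := by
      intro w' hw'
      obtain ⟨φ₀, hφ₀⟩ := CardEquivAux.exists_liftWalk_eq w w'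
        (Finset.mem_filter.1 hw').2.2
      calc (Finset.univ.filter fun φ : {v // v ∈ vertSet w} ↪ Fin N =>
          CardEquivAux.liftWalk w φ = w').card
          = Fintype.card {φ : {v // v ∈ vertSet w} ↪ Fin N //
              CardEquivAux.liftWalk w φ = w'} := (Fintype.card_subtype _).symm
        _ = ∏ i : Fin N ⊕ Finset (Finset (Fin N)),
              (Fintype.card {v : {v // v ∈ vertSet w} //
                CardEquivAux.colorS w v = i}).factorial :=
            CardEquivAux.fiber_card w w' φ₀ hφ₀
        _ = M := CardEquivAux.prod_card_colorclass w
    rw [Finset.sum_congr rfl hfib, Finset.sum_const, smul_eq_mul]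
  have hM0 : (0 : ℝ) < (M : ℝ) := by
    have : 0 < M := Finset.prod_pos fun _ _ => Nat.factorial_pos _
    exact_mod_cast this
  have hprod : ∏ α ∈ (edgeSet w).powerset.filter (· ≠ ∅),
      ((Nat.factorial ((α.inf id \ (edgeSet w \ α).sup id) \ visited w).card : ℝ))⁻¹ =
      ((M : ℕ) : ℝ)⁻¹ := by
    rw [hM]
    push_cast
    rw [← Finset.prod_inv_distrib]
  rw [hprod]
  have hkey : (N.descFactorial (vertSet w).card : ℝ) =
      ((Finset.univ.filter fun w' : WalkData (Fin N) k =>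
        IsClosedWalk q k w' ∧ WalkEquiv w w').card : ℝ) * (M : ℝ) := by
    exact_mod_cast congrArg (Nat.cast : ℕ → ℝ) key
  rw [hkey, mul_assoc, mul_inv_cancel₀ (ne_of_gt hM0), mul_one]

end
end

section
/- Fix q ≥ 2, p > 0, C > 0, and suppose the edge-weight moments satisfy X_{2m} ≤ (C·m)^{2m} for all m ∈ ℕ. Then there exists a constant C_3 > 0, depending only on C, such that for all integers j ≥ 1, l ≥ 1 and all positive integers i_1, …, i_l with s := i_1 + … + i_l, the ordered numbered cluster weight satisfies θ(j; i_1, …, i_l) := q^{2s} · n(j; i_1, …, i_l) · ∏_{r=1}^{l} (p · X_{2 i_r}) ≤ 2^{j} · q^{2s} · C_3^{s} · s^{2s} · (1+p)^{s}, where n(j; i_1, …, i_l) := binom(j+s−1, j−1) · s! · ∏_{r=1}^{l} i_r / ( s·(s−i_1)·(s−i_1−i_2)···i_l · ∏_{r=1}^{l} i_r! ). -/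
open Finset MeasureTheory


lemma pow_self_le_three_pow_mul_factorial (n : ℕ) :
    (n : ℝ) ^ n ≤ 3 ^ n * n.factorial := by
  induction n with
  | zero => norm_num
  | succ n ih =>
    have key : ((n + 1 : ℕ) : ℝ) ^ n ≤ 3 * (n : ℝ) ^ n := by
      rcases Nat.eq_zero_or_pos n with h | h
      · subst h; norm_num
      · have hn : (0 : ℝ) < n := by exact_mod_cast h
        have h1 : ((n : ℝ) + 1) / n ≤ Real.exp (1 / n) := by
          have := Real.add_one_le_exp (1 / (n : ℝ))
          rw [add_div]
          calc (n:ℝ)/n + 1/n = 1/n + 1 := by rw [div_self hn.ne', add_comm]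
            _ ≤ _ := this
        have h2 : (((n : ℝ) + 1) / n) ^ n ≤ Real.exp (1 / n) ^ n :=
          pow_le_pow_left₀ (by positivity) h1 n
        have h3 : Real.exp (1 / (n : ℝ)) ^ n = Real.exp 1 := by
          rw [← Real.exp_nat_mul]; congr 1; field_simp
        have h4 : (((n : ℝ) + 1) / n) ^ n * (n : ℝ) ^ n = ((n : ℝ) + 1) ^ n := by
          rw [div_pow, div_mul_cancel₀]; positivity
        have h5 : Real.exp 1 ≤ 3 := by
          have := Real.exp_one_lt_d9; linarith
        calc ((n + 1 : ℕ) : ℝ) ^ n = (((n : ℝ) + 1) / n) ^ n * (n : ℝ) ^ n := by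
              rw [h4]; push_cast; ring
          _ ≤ 3 * (n : ℝ) ^ n := by
              have hnn : (0:ℝ) ≤ (n:ℝ)^n := by positivity
              have := mul_le_mul_of_nonneg_right h2 hnn
              rw [h3] at this
              exact this.trans (mul_le_mul_of_nonneg_right h5 (by positivity))
    calc ((n + 1 : ℕ) : ℝ) ^ (n + 1) = ((n+1:ℕ):ℝ) * ((n + 1 : ℕ) : ℝ) ^ n := by ring
      _ ≤ ((n+1:ℕ):ℝ) * (3 * (n : ℝ) ^ n) :=
          mul_le_mul_of_nonneg_left key (by positivity)
      _ ≤ ((n+1:ℕ):ℝ) * (3 * (3 ^ n * n.factorial)) :=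
          mul_le_mul_of_nonneg_left (mul_le_mul_of_nonneg_left ih (by norm_num)) (by positivity)
      _ = 3 ^ (n+1) * (n+1).factorial := by
          rw [Nat.factorial_succ]; push_cast; ring

lemma choose_le_two_pow' (n k : ℕ) : n.choose k ≤ 2 ^ n := by
  rcases le_or_gt k n with h | h
  · calc n.choose k ≤ ∑ m ∈ range (n + 1), n.choose m :=
        Finset.single_le_sum (fun _ _ => Nat.zero_le _) (mem_range.mpr (Nat.lt_succ_of_le h))
      _ = 2 ^ n := Nat.sum_range_choose n
  · simp [Nat.choose_eq_zero_of_lt h]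

/-- If the edge-weight moments `X k = E[a^k]` satisfy
`X_{2m} ≤ (C m)^{2m}`, then there is a constant `C₃ > 0` depending only on `C` such that for
all `j, l ≥ 1` and positive integers `i₁, …, i_l` with `s = i₁ + ⋯ + i_l`, the ordered
numbered cluster weight satisfies
`θ(j; i₁, …, i_l) = q^{2s} n(j; i₁, …, i_l) ∏_r (p X_{2 i_r})
  ≤ 2^j q^{2s} C₃^s s^{2s} (1+p)^s`,
where `n(j; i₁,…,i_l) = C(j+s-1, j-1) s! ∏ i_r / (s (s-i₁) (s-i₁-i₂) ⋯ i_l ∏ i_r!)`.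
(The index `r` runs over `0, …, l-1`, so `i r` is the paper's `i_{r+1}`.) -/
theorem cluster_weight_bound (C : ℝ) (hC : 0 < C) :
    ∃ C₃ : ℝ, 0 < C₃ ∧
      ∀ (q : ℕ), 2 ≤ q → ∀ (p : ℝ), 0 < p →
      ∀ (Ω : Type) [MeasureSpace Ω], IsProbabilityMeasure (volume : Measure Ω) →
      ∀ (a : Ω → ℝ) (X : ℕ → ℝ),
        (∀ n : ℕ, Integrable (fun ω => a ω ^ n) volume) →
        (∀ n : ℕ, X n = ∫ ω, a ω ^ n) →
        (∀ m : ℕ, 1 ≤ m → X (2 * m) ≤ (C * m) ^ (2 * m)) →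
      ∀ (j l : ℕ), 1 ≤ j → 1 ≤ l → ∀ i : ℕ → ℕ, (∀ r < l, 1 ≤ i r) →
      ∀ s : ℕ, s = ∑ r ∈ Finset.range l, i r →
        (q : ℝ) ^ (2 * s) *
          (((Nat.choose (j + s - 1) (j - 1) : ℕ) : ℝ) *
            ((Nat.factorial s : ℝ) * ∏ r ∈ Finset.range l, (i r : ℝ)) /
            ((∏ r ∈ Finset.range l, ((s - ∑ t ∈ Finset.range r, i t : ℕ) : ℝ)) *
              ∏ r ∈ Finset.range l, ((Nat.factorial (i r) : ℕ) : ℝ))) *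
          (∏ r ∈ Finset.range l, (p * X (2 * i r))) ≤
        2 ^ j * (q : ℝ) ^ (2 * s) * C₃ ^ s * (s : ℝ) ^ (2 * s) * (1 + p) ^ s := by
  refine ⟨36 * C ^ 2, by positivity, ?_⟩
  intro q hq p hp Ω _ hprob a X hint hX hmom j l hj hl i hi s hs
  -- notation
  set N1 : ℝ := ((j + s - 1).choose (j - 1) : ℝ) with hN1
  set F : ℝ := (s.factorial : ℝ) with hF
  set PI : ℝ := ∏ r ∈ range l, (i r : ℝ) with hPI
  set D1 : ℝ := ∏ r ∈ range l, ((s - ∑ t ∈ range r, i t : ℕ) : ℝ) with hD1def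
  set D2 : ℝ := ∏ r ∈ range l, ((i r).factorial : ℝ) with hD2def
  set P : ℝ := ∏ r ∈ range l, (p * X (2 * i r)) with hPdef
  -- basic facts
  have hls : l ≤ s := by
    rw [hs]
    calc l = ∑ _r ∈ range l, 1 := by simp
      _ ≤ ∑ r ∈ range l, i r := Finset.sum_le_sum (fun r hr => hi r (mem_range.mp hr))
  have hs1 : 1 ≤ s := le_trans hl hls
  have hirs : ∀ r, r < l → i r ≤ s := by
    intro r hr
    rw [hs]
    exact Finset.single_le_sum (fun t _ => Nat.zero_le _) (mem_range.mpr hr)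
  have hD1 : (1 : ℝ) ≤ D1 := by
    rw [hD1def, ← Nat.cast_prod]
    have : 1 ≤ ∏ r ∈ range l, (s - ∑ t ∈ range r, i t) := Finset.one_le_prod' ?_
    · exact_mod_cast this
    intro r hr
    have hr' := mem_range.mp hr
    have hsum : (∑ t ∈ range r, i t) + 1 ≤ s := by
      have hsub : range (r + 1) ⊆ range l := Finset.range_subset_range.mpr hr'
      have h2 := Finset.sum_le_sum_of_subset (f := i) hsub
      rw [Finset.sum_range_succ] at h2
      have h1 : 1 ≤ i r := hi r hr'
      omega
    have : 1 ≤ s - ∑ t ∈ range r, i t := by omega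
    exact_mod_cast this
  have hD2pos : (0 : ℝ) < D2 := by
    rw [hD2def]
    apply Finset.prod_pos
    intro r _
    exact_mod_cast Nat.factorial_pos (i r)
  have hX0 : ∀ m : ℕ, 0 ≤ X (2 * m) := by
    intro m
    rw [hX]
    apply integral_nonneg
    intro ω
    show (0:ℝ) ≤ a ω ^ (2 * m)
    rw [pow_mul]
    positivity
  have hP0 : (0 : ℝ) ≤ P := by
    rw [hPdef]
    exact Finset.prod_nonneg fun r _ => mul_nonneg hp.le (hX0 _)
  have hNum0 : (0 : ℝ) ≤ N1 * (F * PI) := by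
    have : (0:ℝ) ≤ PI := Finset.prod_nonneg fun r _ => by positivity
    positivity
  -- per-factor moment bound
  have hfac : ∀ r ∈ range l, p * X (2 * i r) ≤
      (1 + p) * ((3 * C) ^ (2 * i r) * ((i r).factorial : ℝ) ^ 2) := by
    intro r hr
    have hr' := mem_range.mp hr
    have h1 : X (2 * i r) ≤ (C * i r) ^ (2 * i r) := hmom (i r) (hi r hr')
    have h2 : (C * (i r : ℝ)) ^ (2 * i r) ≤ (3 * C) ^ (2 * i r) * ((i r).factorial : ℝ) ^ 2 := by
      have key : ((i r : ℝ)) ^ (i r) ≤ 3 ^ (i r) * (i r).factorial :=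
        pow_self_le_three_pow_mul_factorial (i r)
      have key2 : (((i r : ℝ)) ^ (i r)) ^ 2 ≤ (3 ^ (i r) * ((i r).factorial : ℝ)) ^ 2 :=
        pow_le_pow_left₀ (by positivity) key 2
      calc (C * (i r : ℝ)) ^ (2 * i r) = C ^ (2 * i r) * ((i r : ℝ) ^ (i r)) ^ 2 := by ring
        _ ≤ C ^ (2 * i r) * (3 ^ (i r) * ((i r).factorial : ℝ)) ^ 2 :=
            mul_le_mul_of_nonneg_left key2 (by positivity)
        _ = (3 * C) ^ (2 * i r) * ((i r).factorial : ℝ) ^ 2 := by ring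
    calc p * X (2 * i r) ≤ p * ((3 * C) ^ (2 * i r) * ((i r).factorial : ℝ) ^ 2) :=
          mul_le_mul_of_nonneg_left (h1.trans h2) hp.le
      _ ≤ (1 + p) * ((3 * C) ^ (2 * i r) * ((i r).factorial : ℝ) ^ 2) := by
          apply mul_le_mul_of_nonneg_right (by linarith) (by positivity)
  -- product bound
  have hP : P ≤ (1 + p) ^ s * ((3 * C) ^ (2 * s) * D2 ^ 2) := by
    have step1 : P ≤ ∏ r ∈ range l, ((1 + p) * ((3 * C) ^ (2 * i r) * ((i r).factorial : ℝ) ^ 2)) := by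
      rw [hPdef]
      exact Finset.prod_le_prod (fun r _ => mul_nonneg hp.le (hX0 _)) hfac
    have step2 : ∏ r ∈ range l, ((1 + p) * ((3 * C) ^ (2 * i r) * ((i r).factorial : ℝ) ^ 2))
        = (1 + p) ^ l * ((3 * C) ^ (2 * s) * D2 ^ 2) := by
      rw [Finset.prod_mul_distrib, Finset.prod_mul_distrib, Finset.prod_const,
        Finset.card_range, Finset.prod_pow_eq_pow_sum, ← Finset.mul_sum, ← hs,
        Finset.prod_pow, ← hD2def]
    have step3 : (1 + p) ^ l ≤ (1 + p) ^ s := pow_le_pow_right₀ (by linarith) hls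
    calc P ≤ (1 + p) ^ l * ((3 * C) ^ (2 * s) * D2 ^ 2) := by rw [← step2]; exact step1
      _ ≤ (1 + p) ^ s * ((3 * C) ^ (2 * s) * D2 ^ 2) :=
        mul_le_mul_of_nonneg_right step3 (by positivity)
  -- combinatorial bounds
  have hN1b : N1 ≤ (2 : ℝ) ^ (j + s) := by
    rw [hN1]
    calc ((j + s - 1).choose (j - 1) : ℝ) ≤ ((2 ^ (j + s - 1) : ℕ) : ℝ) := by
          exact_mod_cast choose_le_two_pow' (j + s - 1) (j - 1)
      _ ≤ ((2 ^ (j + s) : ℕ) : ℝ) := by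
          exact_mod_cast Nat.pow_le_pow_right (by norm_num) (Nat.sub_le _ _)
      _ = (2 : ℝ) ^ (j + s) := by push_cast; ring
  have hFb : F ≤ (s : ℝ) ^ s := by
    rw [hF]
    exact_mod_cast Nat.factorial_le_pow s
  have hPIb : PI ≤ (2 : ℝ) ^ s := by
    rw [hPI]
    calc ∏ r ∈ range l, (i r : ℝ) ≤ ∏ r ∈ range l, (2 : ℝ) ^ (i r) := by
          apply Finset.prod_le_prod (fun r _ => by positivity)
          intro r _
          exact_mod_cast (Nat.lt_two_pow_self (n := i r)).le
      _ = (2 : ℝ) ^ s := by rw [Finset.prod_pow_eq_pow_sum, hs]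
  have hD2b : D2 ≤ (s : ℝ) ^ s := by
    rw [hD2def]
    calc ∏ r ∈ range l, ((i r).factorial : ℝ) ≤ ∏ r ∈ range l, (s : ℝ) ^ (i r) := by
          apply Finset.prod_le_prod (fun r _ => by positivity)
          intro r hr
          have : (i r).factorial ≤ s ^ (i r) :=
            le_trans (Nat.factorial_le_pow (i r))
              (Nat.pow_le_pow_left (hirs r (mem_range.mp hr)) (i r))
          exact_mod_cast this
      _ = (s : ℝ) ^ s := by rw [Finset.prod_pow_eq_pow_sum, hs]
  -- main chain
  have hq0 : (0 : ℝ) ≤ (q : ℝ) ^ (2 * s) := by positivity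
  calc (q : ℝ) ^ (2 * s) * (N1 * (F * PI) / (D1 * D2)) * P
      ≤ (q : ℝ) ^ (2 * s) * (N1 * (F * PI) / D2) * P := by
        refine mul_le_mul_of_nonneg_right (mul_le_mul_of_nonneg_left ?_ hq0) hP0
        exact div_le_div_of_nonneg_left hNum0 hD2pos (by nlinarith)
    _ ≤ (q : ℝ) ^ (2 * s) * (N1 * (F * PI) / D2) *
        ((1 + p) ^ s * ((3 * C) ^ (2 * s) * D2 ^ 2)) :=
        mul_le_mul_of_nonneg_left hP (mul_nonneg hq0 (div_nonneg hNum0 hD2pos.le))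
    _ = (q : ℝ) ^ (2 * s) * (N1 * (F * PI)) * ((1 + p) ^ s * ((3 * C) ^ (2 * s) * D2)) := by
        field_simp
    _ ≤ (q : ℝ) ^ (2 * s) * ((2 : ℝ) ^ (j + s) * ((s : ℝ) ^ s * (2 : ℝ) ^ s)) *
        ((1 + p) ^ s * ((3 * C) ^ (2 * s) * (s : ℝ) ^ s)) := by
        have hPI0 : (0:ℝ) ≤ PI := Finset.prod_nonneg fun r _ => by positivity
        gcongr <;> positivity
    _ = 2 ^ j * (q : ℝ) ^ (2 * s) * (36 * C ^ 2) ^ s * (s : ℝ) ^ (2 * s) * (1 + p) ^ s := by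
        have h36 : ((36 : ℝ) * C ^ 2) ^ s = (2 ^ s * 2 ^ s) * (3 * C) ^ (2 * s) := by
          calc ((36 : ℝ) * C ^ 2) ^ s = ((2 * 2) * (3 * C) ^ 2) ^ s := by norm_num; ring_nf
            _ = (2 * 2 : ℝ) ^ s * ((3 * C) ^ 2) ^ s := by rw [mul_pow]
            _ = (2 ^ s * 2 ^ s) * (3 * C) ^ (2 * s) := by
                rw [mul_pow, ← pow_mul]
        rw [h36]
        ring
end

section
/- For all integers q ≥ 2 and k ≥ 1, Σ_{i=1}^{k} (1/(q·i+1)) · binom(q·i+1, i) · binom(2k+i−1, i−1) ≤ 2^{(q+3)·k}. (The left-hand side bounds the number of ordered numbered skeletons: rooted q-uniform hypertrees with i ≤ k hyperedges, with a linear order on the hyperedges at each vertex, together with an assignment of positive even step counts summing to 2k to the hyperedges.) -/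
open Finset

lemma choose_le_two_pow'_s12 (n m : ℕ) : Nat.choose n m ≤ 2 ^ n := by
  rcases le_or_gt m n with h | h
  · calc Nat.choose n m ≤ ∑ j ∈ range (n+1), Nat.choose n j :=
        Finset.single_le_sum (fun j _ => Nat.zero_le _) (mem_range.2 (Nat.lt_succ_of_le h))
    _ = 2 ^ n := Nat.sum_range_choose n
  · rw [Nat.choose_eq_zero_of_lt h]; exact Nat.zero_le _

lemma geom_sum_le' (m k : ℕ) (hm : 1 ≤ m) : ∑ i ∈ Icc 1 k, 2 ^ (m * i) ≤ 2 ^ (m * k + 1) := by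
  induction k with
  | zero => simp
  | succ k ih =>
    rw [Finset.sum_Icc_succ_top (by omega)]
    have h1 : 2 ^ (m * k + 1) ≤ 2 ^ (m * (k+1)) :=
      Nat.pow_le_pow_right (by norm_num) (by nlinarith)
    calc ∑ i ∈ Icc 1 k, 2 ^ (m * i) + 2 ^ (m * (k+1))
        ≤ 2 ^ (m * (k+1)) + 2 ^ (m * (k+1)) := by omega
      _ = 2 ^ (m * (k+1) + 1) := by ring

/-- For `q ≥ 2` and `k ≥ 1`,
`∑_{i=1}^k (1/(qi+1)) C(qi+1, i) C(2k+i-1, i-1) ≤ 2^{(q+3)k}`: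
the number of ordered numbered skeletons is at most `2^{(q+3)k}`. -/
theorem ordered_numbered_skeleton_count_le (q k : ℕ) (hq : 2 ≤ q) (hk : 1 ≤ k) :
    ∑ i ∈ Finset.Icc 1 k,
        (((q * i + 1 : ℕ) : ℝ))⁻¹ * ((Nat.choose (q * i + 1) i : ℕ) : ℝ) *
          ((Nat.choose (2 * k + i - 1) (i - 1) : ℕ) : ℝ) ≤
      2 ^ ((q + 3) * k) := by
  have key : ∀ i ∈ Icc 1 k,
      (((q * i + 1 : ℕ) : ℝ))⁻¹ * ((Nat.choose (q * i + 1) i : ℕ) : ℝ) *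
        ((Nat.choose (2 * k + i - 1) (i - 1) : ℕ) : ℝ)
      ≤ (3:ℝ)⁻¹ * 2 ^ ((q+1)*i + 2*k) := by
    intro i hi
    obtain ⟨hi1, hik⟩ := mem_Icc.mp hi
    have h1 : ((q*i+1:ℕ):ℝ)⁻¹ ≤ (3:ℝ)⁻¹ := by
      apply inv_anti₀ (by norm_num)
      exact_mod_cast (by nlinarith : (3:ℕ) ≤ q*i+1)
    have h2 : ((Nat.choose (q*i+1) i : ℕ):ℝ) ≤ 2 ^ (q*i+1) := by
      exact_mod_cast choose_le_two_pow'_s12 _ _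
    have h3 : ((Nat.choose (2*k+i-1) (i-1):ℕ):ℝ) ≤ 2 ^ (2*k+i-1) := by
      exact_mod_cast choose_le_two_pow'_s12 _ _
    calc ((q*i+1:ℕ):ℝ)⁻¹ * ((Nat.choose (q*i+1) i : ℕ):ℝ) * ((Nat.choose (2*k+i-1) (i-1):ℕ):ℝ)
        ≤ (3:ℝ)⁻¹ * 2 ^ (q*i+1) * 2 ^ (2*k+i-1) := by
          gcongr <;> positivity
      _ = (3:ℝ)⁻¹ * 2 ^ ((q+1)*i + 2*k) := by
          rw [mul_assoc, ← pow_add]; congr 2; rw [add_mul, one_mul]; omega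
  have hsum : ∑ i ∈ Icc 1 k, (2:ℝ) ^ ((q+1)*i + 2*k) ≤ 2 ^ ((q+3)*k + 1) := by
    have hn : ∑ i ∈ Icc 1 k, 2 ^ ((q+1)*i + 2*k) ≤ 2 ^ ((q+3)*k + 1) := by
      calc ∑ i ∈ Icc 1 k, 2 ^ ((q+1)*i + 2*k)
          = (∑ i ∈ Icc 1 k, 2 ^ ((q+1)*i)) * 2 ^ (2*k) := by
            rw [Finset.sum_mul]; exact Finset.sum_congr rfl fun i _ => (pow_add 2 _ _)
        _ ≤ 2 ^ ((q+1)*k + 1) * 2 ^ (2*k) := by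
            gcongr; exact geom_sum_le' (q+1) k (by omega)
        _ = 2 ^ ((q+3)*k + 1) := by rw [← pow_add]; congr 1; ring
    exact_mod_cast hn
  have hpos : (0:ℝ) < 2 ^ ((q+3)*k) := by positivity
  calc ∑ i ∈ Finset.Icc 1 k,
        (((q * i + 1 : ℕ) : ℝ))⁻¹ * ((Nat.choose (q * i + 1) i : ℕ) : ℝ) *
          ((Nat.choose (2 * k + i - 1) (i - 1) : ℕ) : ℝ)
      ≤ ∑ i ∈ Icc 1 k, (3:ℝ)⁻¹ * 2 ^ ((q+1)*i + 2*k) := Finset.sum_le_sum key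
    _ = (3:ℝ)⁻¹ * ∑ i ∈ Icc 1 k, (2:ℝ) ^ ((q+1)*i + 2*k) := by rw [Finset.mul_sum]
    _ ≤ (3:ℝ)⁻¹ * 2 ^ ((q+3)*k + 1) := by gcongr
    _ ≤ 2 ^ ((q+3)*k) := by rw [pow_succ]; nlinarith
end
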